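/- arXiv:0809.1052 — 8 statements merged into one kernel-verified Lean document; each statement's English description precedes it below -/
import Mathlib

section
/- For the scheme K_{n_1} ≀ K_{n_2} ≀ ⋯ ≀ K_{n_d} and any indices 0 ≤ i, j, h ≤ d, the matrix E_i^* A_j E_h^* is nonzero if and only if one of the following holds: (1) h = 0 and i = j; (2) i = j = h with 1 ≤ h and n_h ≥ 3; (3) i = j and 1 ≤ h < j; (4) j = h and 0 ≤ i < h; (5) i = h and 0 ≤ j < h. -/
/-!
Writing `L(x, y)` for one plus the last coordinate at which `x` and `y` differ (and `0` for
`x = y`), `(x, y) ∈ R_i` means `L(x, y) = i`, and `(E_i^* A_j E_h^*)_{yz} = 1` exactly when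
`L(x₀, y) = i`, `L(y, z) = j`, `L(x₀, z) = h`. Now `L` is an ultrametric, so in every triangle
the largest side occurs twice; conversely any such triple of sides `≤ d` is realised from `x₀`,
by changing one coordinate at a time, except that an equilateral triangle of side `k + 1` needs
three distinct values in coordinate `k`, i.e. `n_{k+1} ≥ 3`.
-/

open scoped Classical

noncomputable section

/-- Relation `R i` of the wreath product scheme `K_{n 1} ≀ ⋯ ≀ K_{n d}`
(coordinates 0-indexed): `R 0` is the identity relation; for `1 ≤ i ≤ d`,
`(x, y) ∈ R i` iff coordinate `i - 1` is the largest coordinate where `x`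
and `y` differ. -/
def wRel (d : ℕ) (n : Fin d → ℕ) (i : ℕ) (x y : ∀ k : Fin d, Fin (n k)) : Prop :=
  if h : 1 ≤ i ∧ i ≤ d then
    x ⟨i - 1, by omega⟩ ≠ y ⟨i - 1, by omega⟩ ∧
      ∀ k : Fin d, i - 1 < (k : ℕ) → x k = y k
  else x = y

/-- Adjacency matrix `A i`. -/
def wA (d : ℕ) (n : Fin d → ℕ) (i : ℕ) :
    Matrix (∀ k : Fin d, Fin (n k)) (∀ k : Fin d, Fin (n k)) ℂ :=
  Matrix.of fun x y => if wRel d n i x y then 1 else 0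

/-- The base vertex `(1, 1, …, 1)` (0-indexed: all coordinates `0`). -/
def wBase (d : ℕ) (n : Fin d → ℕ) (hn : ∀ k, 2 ≤ n k) : ∀ k : Fin d, Fin (n k) :=
  fun k => ⟨0, by have := hn k; omega⟩

/-- Dual idempotent `E_i^*` with respect to the base vertex. -/
def wE (d : ℕ) (n : Fin d → ℕ) (hn : ∀ k, 2 ≤ n k) (i : ℕ) :
    Matrix (∀ k : Fin d, Fin (n k)) (∀ k : Fin d, Fin (n k)) ℂ :=
  Matrix.of fun y z => if y = z ∧ wRel d n i (wBase d n hn) y then 1 else 0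

/-- `T₀`: the linear span of the triple products `E_i^* A_j E_h^*`. -/
def wT0 (d : ℕ) (n : Fin d → ℕ) (hn : ∀ k, 2 ≤ n k) :
    Submodule ℂ (Matrix (∀ k : Fin d, Fin (n k)) (∀ k : Fin d, Fin (n k)) ℂ) :=
  Submodule.span ℂ
    {M | ∃ i j h : ℕ, i ≤ d ∧ j ≤ d ∧ h ≤ d ∧
      M = wE d n hn i * wA d n j * wE d n hn h}

/-- The Terwilliger algebra: the unital subalgebra generated by the `A i`
and the `E_i^*`. -/
def wT (d : ℕ) (n : Fin d → ℕ) (hn : ∀ k, 2 ≤ n k) :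
    Subalgebra ℂ (Matrix (∀ k : Fin d, Fin (n k)) (∀ k : Fin d, Fin (n k)) ℂ) :=
  Algebra.adjoin ℂ
    ({M | ∃ i ≤ d, M = wA d n i} ∪ {M | ∃ i ≤ d, M = wE d n hn i})

section WreathLevel

variable {d : ℕ} {α : Fin d → Type*}

/-- The index `i` with `(x, y) ∈ R_i`; the empty supremum `0` covers `x = y`. -/
def wLevel (x y : ∀ k, α k) : ℕ :=
  (Finset.univ.filter fun k => x k ≠ y k).sup fun k => (k : ℕ) + 1

theorem wLevel_le_iff {x y : ∀ k, α k} {m : ℕ} :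
    wLevel x y ≤ m ↔ ∀ k : Fin d, m ≤ k → x k = y k := by
  simp only [wLevel, Finset.sup_le_iff, Finset.mem_filter, Finset.mem_univ, true_and]
  refine forall_congr' fun k => ?_
  by_cases hk : x k = y k
  · simp [hk]
  · simp only [hk, ne_eq, not_false_eq_true, true_imp_iff, imp_false, not_le]
    omega

theorem wLevel_comm (x y : ∀ k, α k) : wLevel x y = wLevel y x := by
  simp only [wLevel, ne_comm]

@[simp]
theorem wLevel_eq_zero_iff {x y : ∀ k, α k} : wLevel x y = 0 ↔ x = y := by
  rw [← Nat.le_zero, wLevel_le_iff, funext_iff]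
  simp

@[simp]
theorem wLevel_self (x : ∀ k, α k) : wLevel x x = 0 :=
  wLevel_eq_zero_iff.2 rfl

theorem wLevel_eq_succ_iff {x y : ∀ k, α k} (k : Fin d) :
    wLevel x y = k + 1 ↔ x k ≠ y k ∧ ∀ l, k < l → x l = y l := by
  have hle : wLevel x y ≤ k + 1 ↔ ∀ l, k < l → x l = y l := by
    simp only [wLevel_le_iff, Nat.succ_le_iff, Fin.lt_def]
  constructor
  · intro hxy
    refine ⟨fun hk => ?_, hle.1 hxy.le⟩
    have : wLevel x y ≤ k := wLevel_le_iff.2 fun l hl =>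
      (eq_or_lt_of_le (Fin.le_def.2 hl)).elim (fun h => h ▸ hk) (hle.1 hxy.le l)
    omega
  · rintro ⟨hk, hgt⟩
    refine le_antisymm (hle.2 hgt) ?_
    exact Finset.le_sup (f := fun k : Fin d => (k : ℕ) + 1) (by simpa using hk)

theorem wLevel_le_max (x y z : ∀ k, α k) : wLevel x z ≤ max (wLevel x y) (wLevel y z) :=
  wLevel_le_iff.2 fun k hk =>
    (wLevel_le_iff.1 le_rfl k (le_of_max_le_left hk)).trans
      (wLevel_le_iff.1 le_rfl k (le_of_max_le_right hk))

theorem wLevel_eq_of_lt {x y z : ∀ k, α k} (h : wLevel x y < wLevel y z) :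
    wLevel x z = wLevel y z := by
  have := wLevel_le_max x y z
  have := wLevel_le_max y x z
  rw [wLevel_comm y x] at this
  omega

theorem wLevel_update_eq {x y : ∀ k, α k} {k : Fin d} {v : α k} (hxy : wLevel x y ≤ k)
    (hv : v ≠ x k) : wLevel x (Function.update y k v) = k + 1 := by
  refine (wLevel_eq_succ_iff k).2 ⟨by simpa using hv.symm, fun l hl => ?_⟩
  rw [Function.update_of_ne hl.ne']
  exact wLevel_le_iff.1 hxy l hl.le

theorem exists_wLevel_eq [∀ k, Nontrivial (α k)] (x : ∀ k, α k) {m : ℕ} (hm : m ≤ d) :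
    ∃ y, wLevel x y = m := by
  rcases m with _ | m
  · exact ⟨x, wLevel_self x⟩
  · obtain ⟨v, hv⟩ := exists_ne (x ⟨m, hm⟩)
    exact ⟨_, wLevel_update_eq (y := x) (k := ⟨m, hm⟩) (by simp) hv⟩

theorem three_le_card_of_wLevel_eq [∀ k, Fintype (α k)] {x y z : ∀ k, α k} {k : Fin d}
    (hxy : wLevel x y = k + 1) (hyz : wLevel y z = k + 1) (hxz : wLevel x z = k + 1) :
    3 ≤ Fintype.card (α k) := by
  obtain ⟨hxy, -⟩ := (wLevel_eq_succ_iff k).1 hxy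
  obtain ⟨hyz, -⟩ := (wLevel_eq_succ_iff k).1 hyz
  obtain ⟨hxz, -⟩ := (wLevel_eq_succ_iff k).1 hxz
  calc 3 = ({x k, y k, z k} : Finset (α k)).card :=
        (Finset.card_eq_three.2 ⟨_, _, _, hxy, hxz, hyz, rfl⟩).symm
    _ ≤ Fintype.card (α k) := Finset.card_le_univ _

theorem exists_wLevel_equilateral [∀ k, Fintype (α k)] (x : ∀ k, α k) {k : Fin d}
    (hk : 3 ≤ Fintype.card (α k)) :
    ∃ y z, wLevel x y = k + 1 ∧ wLevel y z = k + 1 ∧ wLevel x z = k + 1 := by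
  obtain ⟨a, ha⟩ := Fintype.exists_ne_of_one_lt_card (by omega) (x k)
  obtain ⟨b, -, hb⟩ := Finset.exists_mem_notMem_of_card_lt_card
    (s := {x k, a}) (t := Finset.univ)
    (Finset.card_le_two.trans_lt (by rw [Finset.card_univ]; omega))
  simp only [Finset.mem_insert, Finset.mem_singleton, not_or] at hb
  refine ⟨Function.update x k a, Function.update x k b, wLevel_update_eq (by simp) ha, ?_,
    wLevel_update_eq (by simp) hb.1⟩
  rw [← Function.update_idem a b]
  exact wLevel_update_eq (by simp) (by simpa using hb.2)

theorem exists_wLevel_triangle [∀ k, Fintype (α k)] [∀ k, Nontrivial (α k)]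
    (x : ∀ k, α k) {i j h : ℕ} (hi : i ≤ d) (hj : j ≤ d) (hh : h ≤ d)
    (hmax : i ≤ max j h ∧ j ≤ max i h ∧ h ≤ max i j)
    (hcard : ∀ k : Fin d, i = k + 1 → j = k + 1 → h = k + 1 → 3 ≤ Fintype.card (α k)) :
    ∃ y z, wLevel x y = i ∧ wLevel y z = j ∧ wLevel x z = h := by
  obtain ⟨rfl, rfl⟩ | ⟨hhi, rfl⟩ | ⟨hij, rfl⟩ | ⟨hji, rfl⟩ :
      (i = j ∧ j = h) ∨ (h < i ∧ i = j) ∨ (i < j ∧ j = h) ∨ (j < i ∧ i = h) := by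
    omega
  · rcases i with _ | k
    · exact ⟨x, x, wLevel_self x, wLevel_self x, wLevel_self x⟩
    · exact exists_wLevel_equilateral x (k := ⟨k, hi⟩) (hcard _ rfl rfl rfl)
  · obtain ⟨z, hz⟩ := exists_wLevel_eq x hh
    obtain ⟨y, hy⟩ := exists_wLevel_eq z hi
    exact ⟨y, z, (wLevel_eq_of_lt (hz ▸ hy ▸ hhi)).trans hy, wLevel_comm y z ▸ hy, hz⟩
  · obtain ⟨y, hy⟩ := exists_wLevel_eq x hi
    obtain ⟨z, hz⟩ := exists_wLevel_eq y hj
    exact ⟨y, z, hy, hz, (wLevel_eq_of_lt (hz ▸ hy ▸ hij)).trans hz⟩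
  · obtain ⟨y, hy⟩ := exists_wLevel_eq x hi
    obtain ⟨z, hz⟩ := exists_wLevel_eq y hj
    refine ⟨y, z, hy, hz, ?_⟩
    rw [wLevel_comm, wLevel_eq_of_lt (x := z), wLevel_comm, hy]
    rwa [wLevel_comm, hz, wLevel_comm, hy]

theorem exists_wLevel_triangle_iff [∀ k, Fintype (α k)] [∀ k, Nontrivial (α k)]
    (x : ∀ k, α k) {i j h : ℕ} (hi : i ≤ d) (hj : j ≤ d) (hh : h ≤ d) :
    (∃ y z, wLevel x y = i ∧ wLevel y z = j ∧ wLevel x z = h) ↔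
      (i ≤ max j h ∧ j ≤ max i h ∧ h ≤ max i j) ∧
        ∀ k : Fin d, i = k + 1 → j = k + 1 → h = k + 1 → 3 ≤ Fintype.card (α k) := by
  refine ⟨?_, fun ⟨hmax, hcard⟩ => exists_wLevel_triangle x hi hj hh hmax hcard⟩
  rintro ⟨y, z, rfl, rfl, rfl⟩
  refine ⟨?_, fun k => three_le_card_of_wLevel_eq⟩
  have := wLevel_le_max x z y
  have := wLevel_le_max y x z
  have := wLevel_le_max x y z
  rw [wLevel_comm z y] at *
  rw [wLevel_comm y x] at *
  omega

end WreathLevel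

theorem Matrix.diagonal_mul_mul_diagonal_ne_zero_iff {ι R : Type*} [Fintype ι] [DecidableEq ι]
    [NonUnitalNonAssocSemiring R] [NoZeroDivisors R] (p q : ι → R) (A : Matrix ι ι R) :
    Matrix.diagonal p * A * Matrix.diagonal q ≠ 0 ↔
      ∃ y z, p y ≠ 0 ∧ A y z ≠ 0 ∧ q z ≠ 0 := by
  simp [← Matrix.ext_iff, Matrix.diagonal_mul, Matrix.mul_diagonal, not_forall, and_assoc]

theorem wE_eq_diagonal (d : ℕ) (n : Fin d → ℕ) (hn : ∀ k, 2 ≤ n k) (i : ℕ) :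
    wE d n hn i = Matrix.diagonal fun y => if wRel d n i (wBase d n hn) y then 1 else 0 := by
  ext y z
  by_cases hyz : y = z <;> simp [wE, hyz]

theorem wE_mul_wA_mul_wE_ne_zero_iff (d : ℕ) (n : Fin d → ℕ) (hn : ∀ k, 2 ≤ n k)
    (i j h : ℕ) :
    wE d n hn i * wA d n j * wE d n hn h ≠ 0 ↔
      ∃ y z, wRel d n i (wBase d n hn) y ∧ wRel d n j y z ∧ wRel d n h (wBase d n hn) z := by
  simp [wE_eq_diagonal, wA, Matrix.diagonal_mul_mul_diagonal_ne_zero_iff]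

theorem wRel_iff_wLevel_eq {d : ℕ} {n : Fin d → ℕ} {i : ℕ} (hi : i ≤ d)
    {x y : ∀ k, Fin (n k)} : wRel d n i x y ↔ wLevel x y = i := by
  rcases i with _ | k
  · simp [wRel]
  · rw [wLevel_eq_succ_iff ⟨k, hi⟩]
    simp [wRel, hi, Fin.lt_def]

/-- For the scheme `K_{n_1} ≀ ⋯ ≀ K_{n_d}` and any indices
`0 ≤ i, j, h ≤ d`, the matrix `E_i^* A_j E_h^*` is nonzero iff one of:
(1) `h = 0` and `i = j`; (2) `i = j = h` with `1 ≤ h` and `n_h ≥ 3`;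
(3) `i = j` and `1 ≤ h < j`; (4) `j = h` and `i < h`; (5) `i = h` and `j < h`. -/
theorem triple_product_nonzero_iff_wreath (d : ℕ) (hd : 1 ≤ d)
    (n : Fin d → ℕ) (hn : ∀ k, 2 ≤ n k)
    (i j h : ℕ) (hi : i ≤ d) (hj : j ≤ d) (hh : h ≤ d) :
    wE d n hn i * wA d n j * wE d n hn h ≠ 0 ↔
      (h = 0 ∧ i = j) ∨
      (1 ≤ h ∧ i = h ∧ j = h ∧ 3 ≤ n ⟨h - 1, by omega⟩) ∨
      (i = j ∧ 1 ≤ h ∧ h < j) ∨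
      (j = h ∧ i < h) ∨
      (i = h ∧ j < h) := by
  have : ∀ k, Nontrivial (Fin (n k)) := fun k => Fin.nontrivial_iff_two_le.2 (hn k)
  simp only [wE_mul_wA_mul_wE_ne_zero_iff, wRel_iff_wLevel_eq hi, wRel_iff_wLevel_eq hj,
    wRel_iff_wLevel_eq hh, exists_wLevel_triangle_iff _ hi hj hh, Fintype.card_fin]
  constructor
  · rintro ⟨hmax, hcard⟩
    by_cases hequi : 1 ≤ h ∧ i = h ∧ j = h
    · obtain ⟨h1, hih, hjh⟩ := hequi
      exact Or.inr (Or.inl ⟨h1, hih, hjh, hcard ⟨h - 1, by omega⟩ (by simp; omega)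
        (by simp; omega) (by simp; omega)⟩)
    · omega
  · intro hcases
    refine ⟨by omega, fun k hik hjk hhk => ?_⟩
    obtain ⟨-, -, -, h3⟩ := (hcases.resolve_left (by omega)).resolve_right (by omega)
    rwa [show k = ⟨h - 1, by omega⟩ from Fin.ext (by simp; omega)]
end
end

section
/- For the scheme K_{n_1} ≀ K_{n_2} ≀ ⋯ ≀ K_{n_d}, the ℂ-vector space T_0 has dimension (d+1)^2 + d(d+1)/2 − b, where b = |{k ∈ {1,…,d} : n_k = 2}| is the number of factors K_{n_k} with n_k = 2. In particular (d+1)^2 + d(d−1)/2 ≤ dim_ℂ T_0 ≤ (d+1)^2 + d(d+1)/2. -/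
open scoped Classical

noncomputable section

open Finset

/-!
The relation index of a pair `(x, y)` is `wreathDist x y`, one plus the last coordinate where
`x` and `y` differ (zero if `x = y`), and it is an ultrametric. The product `E_i^* A_j E_h^*` is
the 0/1 matrix of the pairs `(y, z)` for which the triangle `x₀, y, z` has side lengths
`(i, j, h)`. Distinct triples give disjointly supported matrices, so `dim T₀` is the number of
triples realised by a triangle. These are the ultrametric triples, in which the largest value
occurs at least twice, except the equilateral `(k + 1, k + 1, k + 1)` with `n_k = 2`: such a
triangle needs three distinct values in coordinate `k`. Finally, `{0, …, d}³` contains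
`(d + 1)² + d (d + 1) / 2` ultrametric triples.
-/

namespace WreathProduct

variable {d : ℕ}

section IndicatorMatrices

variable {ι m m' K : Type*} [Field K]

theorem linearIndependent_indicator_matrices {s : Finset ι} (p : ι → m → m' → Prop)
    [∀ t y z, Decidable (p t y z)]
    (hdisj : ∀ t ∈ s, ∀ t' ∈ s, ∀ y z, p t y z → p t' y z → t = t')
    (hne : ∀ t ∈ s, ∃ y z, p t y z) :
    LinearIndependent K fun t : s => Matrix.of fun y z => if p t y z then (1 : K) else 0 := by
  rw [Fintype.linearIndependent_iff]
  intro g hg t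
  obtain ⟨y, z, hyz⟩ := hne t t.2
  have hentry := congrFun (congrFun hg y) z
  simp only [Matrix.sum_apply, Matrix.smul_apply, Matrix.of_apply, Matrix.zero_apply,
    smul_eq_mul] at hentry
  rwa [Fintype.sum_eq_single t fun t' ht' => ?_, if_pos hyz, mul_one] at hentry
  rw [if_neg fun h' => ht' (Subtype.ext (hdisj _ t'.2 _ t.2 y z h' hyz)), mul_zero]

theorem finrank_span_indicator_matrices (s : Finset ι) (p : ι → m → m' → Prop)
    [∀ t y z, Decidable (p t y z)]
    (hdisj : ∀ t ∈ s, ∀ t' ∈ s, ∀ y z, p t y z → p t' y z → t = t') :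
    Module.finrank K (Submodule.span K
        ((fun t => Matrix.of fun y z => if p t y z then (1 : K) else 0) '' s)) =
      #(s.filter fun t => ∃ y z, p t y z) := by
  set M := fun t => Matrix.of fun y z => if p t y z then (1 : K) else 0
  set s' := s.filter fun t => ∃ y z, p t y z
  have hspan : Submodule.span K (M '' s) = Submodule.span K (M '' s') := by
    refine le_antisymm (Submodule.span_le.2 ?_) (Submodule.span_mono
      (Set.image_mono (coe_subset.2 (filter_subset _ _))))
    rintro _ ⟨t, ht, rfl⟩
    by_cases hp : ∃ y z, p t y z
    · exact Submodule.subset_span ⟨t, mem_filter.2 ⟨ht, hp⟩, rfl⟩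
    · have : M t = 0 := by
        ext y z
        exact if_neg fun h => hp ⟨y, z, h⟩
      simp [this]
  have hli : LinearIndependent K fun t : s' => M t :=
    linearIndependent_indicator_matrices p
      (fun t ht t' ht' => hdisj t (mem_filter.1 ht).1 t' (mem_filter.1 ht').1)
      (fun t ht => (mem_filter.1 ht).2)
  rw [hspan, Set.image_eq_range, ← Fintype.card_coe s']
  exact finrank_span_eq_card hli

end IndicatorMatrices

section UltrametricTriples

def IsUltrametricTriple (a b c : ℕ) : Prop :=
  a ≤ max b c ∧ b ≤ max a c ∧ c ≤ max a b

def indexTriples (d : ℕ) : Finset (ℕ × ℕ × ℕ) :=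
  range (d + 1) ×ˢ range (d + 1) ×ˢ range (d + 1)

def ultrametricTriples (d : ℕ) : Finset (ℕ × ℕ × ℕ) :=
  (indexTriples d).filter fun t => IsUltrametricTriple t.1 t.2.1 t.2.2

theorem card_filter_isUltrametricTriple {i j : ℕ} (hi : i ≤ d) (hj : j ≤ d) :
    #((range (d + 1)).filter fun h => IsUltrametricTriple i j h) = if i = j then i + 1 else 1 := by
  unfold IsUltrametricTriple
  split_ifs with hij
  · subst hij
    convert card_range (i + 1) using 2
    ext h
    simp only [mem_filter, mem_range]
    omega
  · rw [card_eq_one]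
    refine ⟨max i j, ?_⟩
    ext h
    simp only [mem_filter, mem_range, mem_singleton]
    omega

theorem card_ultrametricTriples (d : ℕ) :
    #(ultrametricTriples d) = (d + 1) ^ 2 + d * (d + 1) / 2 := by
  have hrow : ∀ i ∈ range (d + 1),
      (∑ j ∈ range (d + 1), #((range (d + 1)).filter fun h => IsUltrametricTriple i j h)) =
        (d + 1) + i := by
    intro i hi
    rw [mem_range] at hi
    calc ∑ j ∈ range (d + 1), #((range (d + 1)).filter fun h => IsUltrametricTriple i j h)
        = ∑ j ∈ range (d + 1), (1 + if i = j then i else 0) := by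
          refine sum_congr rfl fun j hj => ?_
          rw [card_filter_isUltrametricTriple (by omega) (by simpa [Nat.lt_succ_iff] using hj)]
          split_ifs <;> omega
      _ = (d + 1) + i := by
          rw [sum_add_distrib, sum_const, card_range, sum_ite_eq, if_pos (mem_range.2 hi),
            smul_eq_mul, mul_one]
  have hgauss := sum_range_id_mul_two (d + 1)
  have hsum : #(ultrametricTriples d) = ∑ i ∈ range (d + 1), ∑ j ∈ range (d + 1),
      #((range (d + 1)).filter fun h => IsUltrametricTriple i j h) := by
    simp only [ultrametricTriples, indexTriples, card_filter, sum_product]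
  rw [hsum, sum_congr rfl hrow, sum_add_distrib, sum_const, card_range, smul_eq_mul]
  rw [Nat.add_sub_cancel, mul_comm (d + 1)] at hgauss
  rw [sq, Nat.div_eq_of_eq_mul_left two_pos hgauss.symm]

end UltrametricTriples

section WreathDist

variable {α : Fin d → Type*}

def wreathDist (x y : ∀ k, α k) : ℕ :=
  (univ.filter fun k => x k ≠ y k).sup fun k => (k : ℕ) + 1

theorem wreathDist_le_iff {x y : ∀ k, α k} {m : ℕ} :
    wreathDist x y ≤ m ↔ ∀ k : Fin d, m ≤ k → x k = y k := by
  simp only [wreathDist, Finset.sup_le_iff, mem_filter, mem_univ, true_and]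
  refine forall_congr' fun k => ?_
  by_cases hk : x k = y k <;> simp [hk]

theorem wreathDist_comm (x y : ∀ k, α k) : wreathDist x y = wreathDist y x := by
  simp only [wreathDist, ne_comm]

theorem wreathDist_self (x : ∀ k, α k) : wreathDist x x = 0 :=
  Nat.le_zero.1 (wreathDist_le_iff.2 fun _ _ => rfl)

theorem wreathDist_le_max (x y z : ∀ k, α k) :
    wreathDist x z ≤ max (wreathDist x y) (wreathDist y z) :=
  wreathDist_le_iff.2 fun k hk =>
    (wreathDist_le_iff.1 le_rfl k (le_of_max_le_left hk)).trans
      (wreathDist_le_iff.1 le_rfl k (le_of_max_le_right hk))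

theorem succ_le_wreathDist {x y : ∀ k, α k} {k : Fin d} (h : x k ≠ y k) :
    (k : ℕ) + 1 ≤ wreathDist x y := by
  by_contra hlt
  exact h (wreathDist_le_iff.1 (by omega) k le_rfl)

theorem ne_of_wreathDist_eq_succ {x y : ∀ k, α k} {k : Fin d}
    (h : wreathDist x y = k + 1) : x k ≠ y k := by
  intro hk
  have : wreathDist x y ≤ k := wreathDist_le_iff.2 fun k' hk' => by
    rcases hk'.eq_or_lt with he | hlt
    · rwa [← Fin.ext he]
    · exact wreathDist_le_iff.1 h.le k' hlt
  omega

theorem wreathDist_update_self (x : ∀ k, α k) {k : Fin d} {c : α k}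
    (hc : c ≠ x k) : wreathDist x (Function.update x k c) = k + 1 := by
  refine le_antisymm (wreathDist_le_iff.2 fun k' hk' => ?_) (succ_le_wreathDist ?_)
  · rw [Function.update_of_ne (by omega)]
  · simpa using hc.symm

theorem isUltrametricTriple_wreathDist (x y z : ∀ k, α k) :
    IsUltrametricTriple (wreathDist x y) (wreathDist y z) (wreathDist x z) := by
  have hxy := wreathDist_le_max x z y
  have hyz := wreathDist_le_max y x z
  rw [wreathDist_comm z y] at hxy
  rw [wreathDist_comm y x] at hyz
  exact ⟨by omega, by omega, wreathDist_le_max x y z⟩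

end WreathDist

section Triangles

variable {n : Fin d → ℕ}

def thinTriples (n : Fin d → ℕ) : Finset (ℕ × ℕ × ℕ) :=
  (univ.filter fun k => n k = 2).image fun k : Fin d =>
    ((k : ℕ) + 1, (k : ℕ) + 1, (k : ℕ) + 1)

theorem exists_wreathDist_eq (hn : ∀ k, 2 ≤ n k) (x : ∀ k, Fin (n k)) {i : ℕ}
    (hi : i ≤ d) : ∃ y, wreathDist x y = i := by
  rcases i with _ | i
  · exact ⟨x, wreathDist_self x⟩
  · have := Fin.nontrivial_iff_two_le.2 (hn ⟨i, hi⟩)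
    obtain ⟨c, hc⟩ := exists_ne (x ⟨i, hi⟩)
    exact ⟨_, wreathDist_update_self x hc⟩

theorem exists_equilateral_triangle (x : ∀ k, Fin (n k)) {k : Fin d} (hk : 3 ≤ n k) :
    ∃ y z, wreathDist x y = k + 1 ∧ wreathDist y z = k + 1 ∧ wreathDist x z = k + 1 := by
  have := Fin.nontrivial_iff_two_le.2 (by omega : 2 ≤ n k)
  obtain ⟨a, hax⟩ := exists_ne (x k)
  obtain ⟨c, hcx, hca⟩ := Fin.exists_ne_and_ne_of_two_lt (x k) a (by omega)
  refine ⟨Function.update x k a, Function.update x k c, wreathDist_update_self x hax, ?_,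
    wreathDist_update_self x hcx⟩
  rw [← Function.update_idem (β := fun k => Fin (n k)) a c x]
  exact wreathDist_update_self _ (by simpa using hca)

theorem three_le_of_wreathDist_eq_succ {x y z : ∀ k, Fin (n k)} {k : Fin d}
    (hxy : wreathDist x y = k + 1) (hyz : wreathDist y z = k + 1)
    (hxz : wreathDist x z = k + 1) : 3 ≤ n k := by
  have hxy' := Fin.val_injective.ne (ne_of_wreathDist_eq_succ hxy)
  have hyz' := Fin.val_injective.ne (ne_of_wreathDist_eq_succ hyz)
  have hxz' := Fin.val_injective.ne (ne_of_wreathDist_eq_succ hxz)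
  have := (x k).isLt
  have := (y k).isLt
  have := (z k).isLt
  omega

theorem exists_triangle_iff (hn : ∀ k, 2 ≤ n k) (x : ∀ k, Fin (n k)) {i j h : ℕ}
    (hi : i ≤ d) (hj : j ≤ d) (hh : h ≤ d) :
    (∃ y z, wreathDist x y = i ∧ wreathDist y z = j ∧ wreathDist x z = h) ↔
      IsUltrametricTriple i j h ∧ (i, j, h) ∉ thinTriples n := by
  constructor
  · rintro ⟨y, z, rfl, rfl, rfl⟩
    refine ⟨isUltrametricTriple_wreathDist x y z, fun hthin => ?_⟩
    simp only [thinTriples, mem_image, mem_filter, mem_univ, true_and, Prod.mk.injEq] at hthin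
    obtain ⟨k, hk, hxy, hyz, hxz⟩ := hthin
    have := three_le_of_wreathDist_eq_succ hxy.symm hyz.symm hxz.symm
    omega
  · rintro ⟨hult, hthin⟩
    unfold IsUltrametricTriple at hult
    by_cases hequi : j = i ∧ h = i
    · obtain ⟨hji, hhi⟩ := hequi
      subst hji hhi
      rcases h with _ | k
      · exact ⟨x, x, wreathDist_self x, wreathDist_self x, wreathDist_self x⟩
      refine exists_equilateral_triangle x (k := ⟨k, hh⟩) ?_
      by_contra hk
      refine hthin (mem_image.2 ⟨⟨k, hh⟩, mem_filter.2 ⟨mem_univ _, ?_⟩, rfl⟩)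
      have := hn ⟨k, hh⟩
      omega
    -- In an ultrametric triple, two unequal sides force the third to be their maximum.
    obtain ⟨y, hy⟩ := exists_wreathDist_eq hn x hi
    by_cases hji : j = i
    · obtain ⟨z, hz⟩ := exists_wreathDist_eq hn x hh
      have := isUltrametricTriple_wreathDist x y z
      unfold IsUltrametricTriple at this
      exact ⟨y, z, hy, by omega, hz⟩
    · obtain ⟨z, hz⟩ := exists_wreathDist_eq hn y hj
      have := isUltrametricTriple_wreathDist x y z
      unfold IsUltrametricTriple at this
      exact ⟨y, z, hy, hz, by omega⟩

theorem card_thinTriples (n : Fin d → ℕ) :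
    #(thinTriples n) = #(univ.filter fun k => n k = 2) :=
  card_image_of_injective _ fun k k' hkk' => Fin.ext (by simpa using congrArg Prod.fst hkk')

theorem thinTriples_subset_ultrametricTriples (n : Fin d → ℕ) :
    thinTriples n ⊆ ultrametricTriples d := by
  intro t ht
  simp only [thinTriples, mem_image] at ht
  obtain ⟨k, -, rfl⟩ := ht
  rw [ultrametricTriples, mem_filter]
  simp only [indexTriples, mem_product, mem_range, IsUltrametricTriple]
  omega

end Triangles

section WreathScheme

variable {n : Fin d → ℕ}

theorem wRel_iff_wreathDist {i : ℕ} (hi : i ≤ d) {x y : ∀ k, Fin (n k)} :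
    wRel d n i x y ↔ wreathDist x y = i := by
  unfold wRel
  split_ifs with h
  · obtain ⟨k, rfl⟩ : ∃ k, i = k + 1 := ⟨i - 1, by omega⟩
    constructor
    · rintro ⟨hne, hagree⟩
      exact le_antisymm (wreathDist_le_iff.2 fun k' hk' => hagree k' (by omega))
        (succ_le_wreathDist hne)
    · intro hdist
      exact ⟨ne_of_wreathDist_eq_succ hdist, fun k' hk' => wreathDist_le_iff.1 hdist.le k' hk'⟩
  · obtain rfl : i = 0 := by omega
    exact ⟨fun hxy => hxy ▸ wreathDist_self x,
      fun hdist => funext fun k => wreathDist_le_iff.1 hdist.le k (Nat.zero_le _)⟩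

theorem wE_mul_wA_mul_wE (hn : ∀ k, 2 ≤ n k) {i j h : ℕ} (hi : i ≤ d) (hj : j ≤ d)
    (hh : h ≤ d) :
    wE d n hn i * wA d n j * wE d n hn h = Matrix.of fun y z =>
      if wreathDist (wBase d n hn) y = i ∧ wreathDist y z = j ∧
        wreathDist (wBase d n hn) z = h then 1 else 0 := by
  have hdiag : ∀ {l : ℕ}, l ≤ d → wE d n hn l =
      Matrix.diagonal fun y => if wreathDist (wBase d n hn) y = l then 1 else 0 := by
    intro l hl
    ext y z
    by_cases hyz : y = z <;> simp [wE, Matrix.diagonal, hyz, wRel_iff_wreathDist hl]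
  ext y z
  rw [hdiag hi, hdiag hh, Matrix.mul_diagonal, Matrix.diagonal_mul]
  simp only [wA, Matrix.of_apply, wRel_iff_wreathDist hj]
  split_ifs <;> simp_all

theorem wT0_eq_span (hn : ∀ k, 2 ≤ n k) :
    wT0 d n hn = Submodule.span ℂ ((fun t : ℕ × ℕ × ℕ => Matrix.of fun y z =>
      if wreathDist (wBase d n hn) y = t.1 ∧ wreathDist y z = t.2.1 ∧
        wreathDist (wBase d n hn) z = t.2.2 then (1 : ℂ) else 0) '' indexTriples d) := by
  unfold wT0
  congr 1
  ext M
  simp only [indexTriples, Set.mem_ofPred_eq, Set.mem_image, coe_product, coe_range,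
    Set.mem_prod, Set.mem_Iio, Prod.exists]
  constructor
  · rintro ⟨i, j, h, hi, hj, hh, rfl⟩
    exact ⟨i, j, h, ⟨by omega, by omega, by omega⟩, (wE_mul_wA_mul_wE hn hi hj hh).symm⟩
  · rintro ⟨i, j, h, ⟨hi, hj, hh⟩, rfl⟩
    exact ⟨i, j, h, by omega, by omega, by omega,
      (wE_mul_wA_mul_wE hn (by omega) (by omega) (by omega)).symm⟩

theorem finrank_wT0 (hn : ∀ k, 2 ≤ n k) :
    Module.finrank ℂ (wT0 d n hn) =
      #(ultrametricTriples d) - #(univ.filter fun k => n k = 2) := by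
  rw [wT0_eq_span hn, finrank_span_indicator_matrices _ _ fun t _ t' _ y z ht ht' =>
      Prod.ext (ht.1.symm.trans ht'.1) (Prod.ext (ht.2.1.symm.trans ht'.2.1)
        (ht.2.2.symm.trans ht'.2.2)),
    ← card_thinTriples, ← card_sdiff_of_subset (thinTriples_subset_ultrametricTriples n)]
  congr 1
  ext ⟨i, j, h⟩
  simp only [ultrametricTriples, indexTriples, mem_filter, mem_sdiff, mem_product, mem_range]
  by_cases hbox : i < d + 1 ∧ j < d + 1 ∧ h < d + 1
  · rw [exists_triangle_iff hn _ (by omega) (by omega) (by omega)]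
    tauto
  · tauto

end WreathScheme

end WreathProduct

open WreathProduct in
theorem dim_T0_wreath_general (d : ℕ) (n : Fin d → ℕ) (hn : ∀ k, 2 ≤ n k) :
    Module.finrank ℂ ↥(wT0 d n hn) =
        (d + 1) ^ 2 + d * (d + 1) / 2 -
          (Finset.univ.filter fun k : Fin d => n k = 2).card ∧
      (d + 1) ^ 2 + d * (d - 1) / 2 ≤ Module.finrank ℂ ↥(wT0 d n hn) ∧
      Module.finrank ℂ ↥(wT0 d n hn) ≤ (d + 1) ^ 2 + d * (d + 1) / 2 := by
  have hb : #(univ.filter fun k : Fin d => n k = 2) ≤ d :=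
    (card_filter_le _ _).trans_eq (card_fin d)
  have hhalf : d * (d + 1) / 2 = d * (d - 1) / 2 + d := by
    rcases d with _ | e
    · rfl
    · rw [Nat.add_sub_cancel, show (e + 1) * (e + 1 + 1) = (e + 1) * e + (e + 1) * 2 by ring,
        Nat.add_mul_div_right _ _ two_pos]
  rw [finrank_wT0, card_ultrametricTriples]
  omega

/-- For the scheme `K_{n_1} ≀ ⋯ ≀ K_{n_d}`, the space `T₀`
spanned by the triple products has dimension `(d+1)^2 + d(d+1)/2 - b`,
where `b` is the number of factors with `n_k = 2`; in particular
`(d+1)^2 + d(d-1)/2 ≤ dim T₀ ≤ (d+1)^2 + d(d+1)/2`. -/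
theorem dim_T0_wreath (d : ℕ) (hd : 1 ≤ d) (n : Fin d → ℕ) (hn : ∀ k, 2 ≤ n k) :
    Module.finrank ℂ ↥(wT0 d n hn) =
        (d + 1) ^ 2 + d * (d + 1) / 2 -
          (Finset.univ.filter fun k : Fin d => n k = 2).card ∧
      (d + 1) ^ 2 + d * (d - 1) / 2 ≤ Module.finrank ℂ ↥(wT0 d n hn) ∧
      Module.finrank ℂ ↥(wT0 d n hn) ≤ (d + 1) ^ 2 + d * (d + 1) / 2 :=
  dim_T0_wreath_general d n hn
end
end

section
/- For the scheme K_{n_1} ≀ K_{n_2} ≀ ⋯ ≀ K_{n_d} and every h with 0 ≤ h ≤ d, one has the matrix identity A_h E_h^* = Σ_{j=0}^{h} E_j^* A_h E_h^*. -/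
open scoped Classical

noncomputable section

/-! The index `i` with `(x, y) ∈ R i` is one more than the largest coordinate where `x` and `y`
differ (`0` if `x = y`). This level is an ultrametric, so whenever `(x, y) ∈ R h` and
`(x₀, y) ∈ R h` we get `(x₀, x) ∈ R j` for exactly one `j ≤ h`: on the support of `A_h E_h^*`
the sum `∑_{j ≤ h} E_j^*` acts as the identity. -/

section DiffLevel

variable {d : ℕ} {α : Fin d → Type*}

def diffLevel (x y : ∀ k, α k) : ℕ :=
  (Finset.univ.filter fun k => x k ≠ y k).sup fun k => (k : ℕ) + 1

theorem diffLevel_le_iff {x y : ∀ k, α k} {h : ℕ} :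
    diffLevel x y ≤ h ↔ ∀ k : Fin d, h ≤ k → x k = y k := by
  simp only [diffLevel, Finset.sup_le_iff, Finset.mem_filter, Finset.mem_univ, true_and]
  exact forall_congr' fun k => by by_cases hk : x k = y k <;> simp [hk]

theorem diffLevel_comm (x y : ∀ k, α k) : diffLevel x y = diffLevel y x := by
  simp only [diffLevel, ne_comm]

theorem diffLevel_le_max (x y z : ∀ k, α k) :
    diffLevel x z ≤ max (diffLevel x y) (diffLevel y z) := by
  rw [diffLevel_le_iff]
  intro k hk
  rw [diffLevel_le_iff.mp le_sup_left k hk, diffLevel_le_iff.mp le_sup_right k hk]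

theorem diffLevel_eq_succ_iff {x y : ∀ k, α k} (m : Fin d) :
    diffLevel x y = m + 1 ↔ x m ≠ y m ∧ ∀ k : Fin d, m < k → x k = y k := by
  rw [le_antisymm_iff, diffLevel_le_iff, Nat.add_one_le_iff, ← not_le, diffLevel_le_iff]
  refine ⟨fun ⟨hgt, hle⟩ => ⟨fun hm => hle fun k hk => ?_, hgt⟩,
    fun ⟨hm, hgt⟩ => ⟨hgt, fun hle => hm (hle m le_rfl)⟩⟩
  rcases hk.lt_or_eq with hk | hk
  · exact hgt k hk
  · exact Fin.ext hk ▸ hm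

end DiffLevel

theorem wRel_iff_diffLevel_eq {d : ℕ} {n : Fin d → ℕ} {i : ℕ} (hi : i ≤ d)
    {x y : ∀ k : Fin d, Fin (n k)} : wRel d n i x y ↔ diffLevel x y = i := by
  cases i with
  | zero =>
    rw [wRel, dif_neg (by omega), ← Nat.le_zero, diffLevel_le_iff]
    simp [funext_iff]
  | succ m =>
    rw [wRel, dif_pos ⟨by omega, hi⟩]
    exact (diffLevel_eq_succ_iff ⟨m, by omega⟩).symm

theorem sum_range_ite_wRel_eq_one {R : Type*} [AddCommMonoidWithOne R] {d : ℕ}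
    {n : Fin d → ℕ} {h : ℕ} (hh : h ≤ d) {x y : ∀ k : Fin d, Fin (n k)}
    (hxy : diffLevel x y ≤ h) :
    ∑ j ∈ Finset.range (h + 1), (if wRel d n j x y then 1 else 0 : R) = 1 := by
  rw [Finset.sum_eq_single_of_mem (diffLevel x y) (Finset.mem_range_succ_iff.mpr hxy)]
  · rw [if_pos ((wRel_iff_diffLevel_eq (hxy.trans hh)).mpr rfl)]
  · intro j hj hne
    rw [if_neg fun hj' => hne ((wRel_iff_diffLevel_eq ?_).mp hj').symm]
    exact (Finset.mem_range_succ_iff.mp hj).trans hh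

theorem AE_eq_sum_wreath_general (d : ℕ) (n : Fin d → ℕ) (hn : ∀ k, 2 ≤ n k)
    (h : ℕ) (hh : h ≤ d) :
    wA d n h * wE d n hn h =
      ∑ j ∈ Finset.range (h + 1), wE d n hn j * wA d n h * wE d n hn h := by
  ext x y
  simp only [Matrix.sum_apply, wE_eq_diagonal, Matrix.mul_diagonal, Matrix.diagonal_mul,
    ← Finset.sum_mul]
  by_cases hxy : wRel d n h x y
  · by_cases hy : wRel d n h (wBase d n hn) y
    · have hx : diffLevel (wBase d n hn) x ≤ h := by
        have := diffLevel_le_max (wBase d n hn) y x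
        rwa [diffLevel_comm y, (wRel_iff_diffLevel_eq hh).mp hxy,
          (wRel_iff_diffLevel_eq hh).mp hy, max_self] at this
      rw [sum_range_ite_wRel_eq_one hh hx, one_mul]
    · simp [hy]
  · simp [wA, hxy]

/-- For the scheme `K_{n_1} ≀ ⋯ ≀ K_{n_d}` and every
`0 ≤ h ≤ d`, one has `A_h E_h^* = Σ_{j=0}^{h} E_j^* A_h E_h^*`. -/
theorem AE_eq_sum_wreath (d : ℕ) (hd : 1 ≤ d) (n : Fin d → ℕ) (hn : ∀ k, 2 ≤ n k)
    (h : ℕ) (hh : h ≤ d) :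
    wA d n h * wE d n hn h =
      ∑ j ∈ Finset.range (h + 1), wE d n hn j * wA d n h * wE d n hn h :=
  AE_eq_sum_wreath_general d n hn h hh
end
end

section
/- For the scheme K_{n_1} ≀ K_{n_2} ≀ ⋯ ≀ K_{n_d} and all indices i, j, h with 1 ≤ h ≤ d, i > h, j > h and i ≠ j, one has the matrix identity A_i E_h^* A_j = (n_h − 1)(∏_{k=1}^{h−1} n_k) · Σ_{r=0}^{d} E_i^* A_r E_j^*. -/
open scoped Classical

noncomputable section

/-!
A vertex `z` with `(x₀, z) ∈ R_h` agrees with `x₀` in every coordinate above `h`, so for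
`i, j > h` we have `(x, z) ∈ R_i ↔ (x, x₀) ∈ R_i` and `(z, y) ∈ R_j ↔ (x₀, y) ∈ R_j`.
Hence `A_i E_h^* A_j = k_h • E_i^* J E_j^*`, where `k_h = |R_h(x₀)| = (n_h - 1) ∏_{k<h} n_k`
is the size of a product of coordinate sets, and `J = ∑_r A_r` because the relations
partition `X × X`.
-/

open Finset

section WreathScheme

variable {d : ℕ} {n : Fin d → ℕ}

theorem wRel_iff_of_pos {i : ℕ} (hi : 1 ≤ i) (hid : i ≤ d) {x y : ∀ k : Fin d, Fin (n k)} :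
    wRel d n i x y ↔
      x ⟨i - 1, by omega⟩ ≠ y ⟨i - 1, by omega⟩ ∧ ∀ k : Fin d, i - 1 < (k : ℕ) → x k = y k := by
  rw [wRel, dif_pos ⟨hi, hid⟩]

theorem wRel.symm {i : ℕ} {x y : ∀ k : Fin d, Fin (n k)} (hxy : wRel d n i x y) :
    wRel d n i y x := by
  unfold wRel at hxy ⊢
  split_ifs at hxy ⊢
  · exact ⟨hxy.1.symm, fun k hk => (hxy.2 k hk).symm⟩
  · exact hxy.symm

theorem wRel_comm {i : ℕ} {x y : ∀ k : Fin d, Fin (n k)} : wRel d n i x y ↔ wRel d n i y x :=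
  ⟨wRel.symm, wRel.symm⟩

theorem wRel.apply_eq_of_le {i : ℕ} {x y : ∀ k : Fin d, Fin (n k)} (hxy : wRel d n i x y)
    (k : Fin d) (hk : i ≤ k) : x k = y k := by
  unfold wRel at hxy
  split_ifs at hxy
  · exact hxy.2 k (by omega)
  · rw [hxy]

theorem wRel_unique {r s : ℕ} (hrd : r ≤ d) (hsd : s ≤ d) {x y : ∀ k : Fin d, Fin (n k)}
    (hr : wRel d n r x y) (hs : wRel d n s x y) : r = s := by
  have key : ∀ {r s : ℕ}, s ≤ d → r < s → wRel d n r x y → ¬ wRel d n s x y :=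
    fun hsd hrs hr hs =>
      ((wRel_iff_of_pos (by omega) hsd).mp hs).1 (hr.apply_eq_of_le _ (Nat.le_sub_one_of_lt hrs))
  rcases lt_trichotomy r s with hrs | hrs | hrs
  · exact absurd hs (key hsd hrs hr)
  · exact hrs
  · exact absurd hr (key hrd hrs hs)

theorem exists_wRel (x y : ∀ k : Fin d, Fin (n k)) : ∃ r ≤ d, wRel d n r x y := by
  by_cases hxy : x = y
  · exact ⟨0, Nat.zero_le d, by simp [wRel, hxy]⟩
  have hne : (univ.filter fun k => x k ≠ y k).Nonempty := by
    simpa [Finset.filter_nonempty_iff, funext_iff] using hxy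
  obtain ⟨m, hm, hmax⟩ := exists_max_image _ (fun k : Fin d => (k : ℕ)) hne
  refine ⟨m + 1, m.isLt, (wRel_iff_of_pos (by omega) m.isLt).mpr ⟨?_, fun k hk => ?_⟩⟩
  · simpa using (mem_filter.mp hm).2
  · by_contra hk'
    have := hmax k (mem_filter.mpr ⟨mem_univ k, hk'⟩)
    omega

theorem sum_wA : ∑ r ∈ range (d + 1), wA d n r = Matrix.of fun _ _ => (1 : ℂ) := by
  ext x y
  obtain ⟨r, hrd, hr⟩ := exists_wRel x y
  rw [Matrix.sum_apply, sum_eq_single_of_mem r (mem_range.mpr (by omega))]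
  · simp [wA, hr]
  · intro s hs hsr
    simp only [wA, Matrix.of_apply, ite_eq_right_iff, one_ne_zero, imp_false]
    exact fun hs' => hsr (wRel_unique (by simpa [Nat.lt_succ_iff] using hs) hrd hs' hr)

theorem wA_apply_comm (i : ℕ) (x y : ∀ k : Fin d, Fin (n k)) : wA d n i x y = wA d n i y x := by
  simp only [wA, Matrix.of_apply, wRel_comm]

variable (hn : ∀ k, 2 ≤ n k)
include hn

theorem wE_eq_diagonal_s8 (i : ℕ) : wE d n hn i = Matrix.diagonal (wA d n i (wBase d n hn)) := by
  ext y z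
  by_cases hyz : y = z
  · subst hyz; simp [wE, wA]
  · simp [wE, hyz]

theorem wA_apply_eq_of_wRel_base {h i : ℕ} (hhi : h < i) (hid : i ≤ d)
    {z : ∀ k : Fin d, Fin (n k)} (hz : wRel d n h (wBase d n hn) z) (x : ∀ k : Fin d, Fin (n k)) :
    wA d n i x z = wA d n i x (wBase d n hn) := by
  have hzx : ∀ k : Fin d, i - 1 ≤ (k : ℕ) → z k = wBase d n hn k :=
    fun k hk => (hz.apply_eq_of_le k (by omega)).symm
  have : wRel d n i x z ↔ wRel d n i x (wBase d n hn) := by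
    simp only [wRel_iff_of_pos (by omega : 1 ≤ i) hid, hzx ⟨i - 1, by omega⟩ le_rfl]
    exact and_congr_right fun _ => forall_congr' fun k => imp_congr_right fun hk => by
      rw [hzx k hk.le]
  simp only [wA, Matrix.of_apply, this]

theorem card_filter_wRel_base {h : ℕ} (hh1 : 1 ≤ h) (hhd : h ≤ d) :
    #(univ.filter (wRel d n h (wBase d n hn))) =
      (n ⟨h - 1, by omega⟩ - 1) * ∏ l ∈ univ.filter (fun l : Fin d => (l : ℕ) < h - 1), n l := by
  set b := wBase d n hn
  have hlt : h - 1 < d := by omega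
  have hsphere : univ.filter (wRel d n h b) = Fintype.piFinset fun k : Fin d =>
      if (k : ℕ) < h - 1 then univ else if (k : ℕ) = h - 1 then {b k}ᶜ else {b k} := by
    ext z
    simp only [mem_filter, mem_univ, true_and, Fintype.mem_piFinset, wRel_iff_of_pos hh1 hhd]
    constructor
    · rintro ⟨hne, heq⟩ k
      split_ifs with hk hk'
      · exact mem_univ _
      · obtain rfl : k = ⟨h - 1, hlt⟩ := Fin.ext hk'
        simpa [eq_comm] using hne
      · simpa [eq_comm] using heq k (by omega)
    · intro hz
      refine ⟨by simpa [eq_comm] using hz ⟨h - 1, hlt⟩, fun k hk => ?_⟩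
      have := hz k
      rw [if_neg (by omega), if_neg (by omega), mem_singleton] at this
      exact this.symm
  rw [hsphere, Fintype.card_piFinset, ← prod_filter_mul_prod_filter_not univ
    (fun k : Fin d => (k : ℕ) < h - 1), mul_comm]
  congr 1
  · have hmem : (⟨h - 1, hlt⟩ : Fin d) ∈ univ.filter fun k : Fin d => ¬ (k : ℕ) < h - 1 :=
      mem_filter.mpr ⟨mem_univ _, lt_irrefl _⟩
    rw [prod_eq_single_of_mem _ hmem]
    · simp [card_compl]
    · intro k hk hkne
      have hk' : ¬ (k : ℕ) < h - 1 := (mem_filter.mp hk).2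
      have hkne' : (k : ℕ) ≠ h - 1 := fun hc => hkne (Fin.ext hc)
      simp [hk', hkne']
  · exact prod_congr rfl fun k hk => by simp [(mem_filter.mp hk).2]

theorem wA_mul_wE_mul_wA_apply {h i j : ℕ} (hhi : h < i) (hid : i ≤ d) (hhj : h < j) (hjd : j ≤ d)
    (x y : ∀ k : Fin d, Fin (n k)) :
    (wA d n i * wE d n hn h * wA d n j) x y =
      #(univ.filter (wRel d n h (wBase d n hn))) *
        (wA d n i (wBase d n hn) x * wA d n j (wBase d n hn) y) := by
  rw [wE_eq_diagonal_s8 hn, Matrix.mul_apply]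
  simp only [Matrix.mul_diagonal]
  calc ∑ z, wA d n i x z * wA d n h (wBase d n hn) z * wA d n j z y
      = ∑ z ∈ univ.filter (wRel d n h (wBase d n hn)), wA d n i x z * wA d n j z y := by
        rw [sum_filter]
        refine sum_congr rfl fun z _ => ?_
        by_cases hz : wRel d n h (wBase d n hn) z <;> simp [wA, hz]
    _ = ∑ z ∈ univ.filter (wRel d n h (wBase d n hn)),
          wA d n i (wBase d n hn) x * wA d n j (wBase d n hn) y := by
        refine sum_congr rfl fun z hz => ?_
        have hz := (mem_filter.mp hz).2
        rw [wA_apply_eq_of_wRel_base hn hhi hid hz, wA_apply_comm j z,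
          wA_apply_eq_of_wRel_base hn hhj hjd hz, wA_apply_comm i x, wA_apply_comm j y]
    _ = _ := by rw [sum_const, nsmul_eq_mul]

theorem wE_mul_allOnes_mul_wE_apply (i j : ℕ) (x y : ∀ k : Fin d, Fin (n k)) :
    (wE d n hn i * Matrix.of (fun _ _ => 1) * wE d n hn j : Matrix _ _ ℂ) x y =
      wA d n i (wBase d n hn) x * wA d n j (wBase d n hn) y := by
  simp [wE_eq_diagonal_s8 hn, Matrix.diagonal_mul, Matrix.mul_diagonal]

end WreathScheme

/-- For the scheme `K_{n_1} ≀ ⋯ ≀ K_{n_d}` and indices with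
`1 ≤ h ≤ d`, `i > h`, `j > h`, `i ≠ j` (and `i, j ≤ d`),
`A_i E_h^* A_j = (n_h - 1)(∏_{k=1}^{h-1} n_k) Σ_{r=0}^{d} E_i^* A_r E_j^*`. -/
theorem AEA_above_wreath (d : ℕ) (n : Fin d → ℕ) (hn : ∀ k, 2 ≤ n k)
    (i j h : ℕ) (hh1 : 1 ≤ h) (hhd : h ≤ d)
    (hhi : h < i) (hhj : h < j) (hid : i ≤ d) (hjd : j ≤ d) :
    wA d n i * wE d n hn h * wA d n j =
      (((n ⟨h - 1, by omega⟩ : ℂ) - 1) *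
          ∏ l ∈ Finset.univ.filter (fun l : Fin d => (l : ℕ) < h - 1), (n l : ℂ)) •
        ∑ r ∈ Finset.range (d + 1), wE d n hn i * wA d n r * wE d n hn j := by
  have hcard : (#(univ.filter (wRel d n h (wBase d n hn))) : ℂ) =
      ((n ⟨h - 1, by omega⟩ : ℂ) - 1) *
        ∏ l ∈ univ.filter (fun l : Fin d => (l : ℕ) < h - 1), (n l : ℂ) := by
    rw [card_filter_wRel_base hn hh1 hhd, Nat.cast_mul, Nat.cast_prod,
      Nat.cast_pred (by have := hn ⟨h - 1, by omega⟩; omega)]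
  ext x y
  rw [← sum_mul, ← mul_sum, sum_wA, Matrix.smul_apply, smul_eq_mul,
    wA_mul_wE_mul_wA_apply hn hhi hid hhj hjd, wE_mul_allOnes_mul_wE_apply, hcard]
end
end

section
/- For the scheme K_{n_1} ≀ K_{n_2} ≀ ⋯ ≀ K_{n_d} and all indices i, j, h with 1 ≤ i < j < h ≤ d, one has the matrix identity A_i E_h^* A_j = (n_i − 1)(∏_{k=1}^{i−1} n_k) · E_h^* A_j E_h^*. -/
open scoped Classical

noncomputable section

/-!
An `R_i`-neighbour `z` of `x` agrees with `x` in every coordinate `≥ i`, and for `i < j < h` the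
entry `(E_h^* A_j) z y` only depends on those coordinates of `z`. Hence summing over `z` in
`A_i (E_h^* A_j)` just multiplies by the valency `k_i = (n_i - 1) n_1 ⋯ n_{i-1}` of `R_i`.
Finally, for `j < h` an `R_j`-step does not change coordinate `h`, so it cannot leave the `h`-th
subconstituent, i.e. `E_h^* A_j = E_h^* A_j E_h^*`.
-/

section WreathScheme

variable {d : ℕ} {n : Fin d → ℕ}

lemma wRel_iff {i : ℕ} (hi : 1 ≤ i) (hid : i ≤ d) (x y : ∀ k : Fin d, Fin (n k)) :
    wRel d n i x y ↔ x ⟨i - 1, by omega⟩ ≠ y ⟨i - 1, by omega⟩ ∧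
      ∀ k : Fin d, i - 1 < (k : ℕ) → x k = y k := by
  rw [wRel, dif_pos ⟨hi, hid⟩]

lemma eq_of_wRel {i : ℕ} {x y : ∀ k : Fin d, Fin (n k)} (hxy : wRel d n i x y) (k : Fin d)
    (hk : i ≤ (k : ℕ)) : x k = y k := by
  unfold wRel at hxy
  split_ifs at hxy with hi
  · exact hxy.2 k (by omega)
  · rw [hxy]

/-- `R_i` only sees the coordinates from `i - 1` on. -/
lemma wRel_congr {i m : ℕ} (hmi : m < i) (hid : i ≤ d) {x x' y y' : ∀ k : Fin d, Fin (n k)}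
    (hx : ∀ k : Fin d, m ≤ (k : ℕ) → x k = x' k)
    (hy : ∀ k : Fin d, m ≤ (k : ℕ) → y k = y' k) :
    wRel d n i x y ↔ wRel d n i x' y' := by
  rw [wRel_iff (by omega) hid, wRel_iff (by omega) hid,
    hx _ (Nat.le_sub_one_of_lt hmi), hy _ (Nat.le_sub_one_of_lt hmi)]
  refine and_congr_right fun _ => forall_congr' fun k => imp_congr_right fun hk => ?_
  rw [hx k (by omega), hy k (by omega)]

lemma filter_wRel_eq_piFinset {i : ℕ} (hi : 1 ≤ i) (hid : i ≤ d) (x : ∀ k : Fin d, Fin (n k)) :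
    Finset.univ.filter (wRel d n i x) =
      Fintype.piFinset fun k => if k = ⟨i - 1, by omega⟩ then {x k}ᶜ
        else if (k : ℕ) < i - 1 then Finset.univ else {x k} := by
  ext z
  simp only [Finset.mem_filter, Finset.mem_univ, true_and, Fintype.mem_piFinset,
    wRel_iff hi hid]
  constructor
  · rintro ⟨hne, hgt⟩ k
    split_ifs with hki hlt
    · subst hki
      simpa [eq_comm] using hne
    · exact Finset.mem_univ _
    · rw [Finset.mem_singleton, hgt k (by simp only [Fin.ext_iff] at hki; omega)]
  · intro hz
    refine ⟨by simpa [eq_comm] using hz ⟨i - 1, by omega⟩, fun k hk => ?_⟩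
    have hzk := hz k
    rw [if_neg (by simp only [Fin.ext_iff]; omega), if_neg (by omega),
      Finset.mem_singleton] at hzk
    exact hzk.symm

lemma card_filter_wRel {i : ℕ} (hi : 1 ≤ i) (hid : i ≤ d) (x : ∀ k : Fin d, Fin (n k)) :
    (Finset.univ.filter (wRel d n i x)).card =
      (n ⟨i - 1, by omega⟩ - 1) *
        ∏ l ∈ Finset.univ.filter (fun l : Fin d => (l : ℕ) < i - 1), n l := by
  set ι : Fin d := ⟨i - 1, by omega⟩
  have hcard (k : Fin d) :
      (if k = ι then ({x k}ᶜ : Finset (Fin (n k)))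
        else if (k : ℕ) < i - 1 then Finset.univ else {x k}).card =
      if k = ι then n k - 1 else if (k : ℕ) < i - 1 then n k else 1 := by
    split_ifs <;> simp [Finset.card_compl]
  have hlt : Finset.univ.filter (fun l : Fin d => l ≠ ι ∧ (l : ℕ) < i - 1) =
      Finset.univ.filter (fun l : Fin d => (l : ℕ) < i - 1) :=
    Finset.filter_congr fun l _ => ⟨And.right, fun h => ⟨fun e => by simp [e, ι] at h, h⟩⟩
  rw [filter_wRel_eq_piFinset hi hid, Fintype.card_piFinset,
    Finset.prod_congr rfl fun k _ => hcard k, Finset.prod_ite, Finset.filter_eq',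
    if_pos (Finset.mem_univ _), Finset.prod_singleton]
  simp only [Finset.prod_ite, Finset.prod_const_one, mul_one, Finset.filter_filter, hlt]

lemma wA_mul_of_agree {i : ℕ} (hi : 1 ≤ i) (hid : i ≤ d)
    (M : Matrix (∀ k : Fin d, Fin (n k)) (∀ k : Fin d, Fin (n k)) ℂ)
    (hM : ∀ x z y, (∀ k : Fin d, i ≤ (k : ℕ) → x k = z k) → M z y = M x y) :
    wA d n i * M = (((n ⟨i - 1, by omega⟩ : ℂ) - 1) *
      ∏ l ∈ Finset.univ.filter (fun l : Fin d => (l : ℕ) < i - 1), (n l : ℂ)) • M := by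
  ext x y
  rw [Matrix.mul_apply, Matrix.smul_apply, smul_eq_mul]
  calc ∑ z, wA d n i x z * M z y = ∑ z ∈ Finset.univ.filter (wRel d n i x), M x y := by
        rw [Finset.sum_filter]
        refine Finset.sum_congr rfl fun z _ => ?_
        simp only [wA, Matrix.of_apply]
        split_ifs with hxz
        · rw [one_mul, hM x z y (eq_of_wRel hxz)]
        · rw [zero_mul]
    _ = _ := by
        rw [Finset.sum_const, card_filter_wRel hi hid, nsmul_eq_mul]
        push_cast [Nat.cast_sub (Fin.pos (x ⟨i - 1, by omega⟩))]
        rfl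

variable (hn : ∀ k, 2 ≤ n k)

lemma wE_mul_apply (h : ℕ) (M : Matrix (∀ k : Fin d, Fin (n k)) (∀ k : Fin d, Fin (n k)) ℂ)
    (x y : ∀ k : Fin d, Fin (n k)) :
    (wE d n hn h * M) x y = if wRel d n h (wBase d n hn) x then M x y else 0 := by
  simp [Matrix.mul_apply, wE, ite_and, ite_mul, Finset.sum_ite_eq]

lemma mul_wE_apply (h : ℕ) (M : Matrix (∀ k : Fin d, Fin (n k)) (∀ k : Fin d, Fin (n k)) ℂ)
    (x y : ∀ k : Fin d, Fin (n k)) :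
    (M * wE d n hn h) x y = if wRel d n h (wBase d n hn) y then M x y else 0 := by
  simp [Matrix.mul_apply, wE, ite_and, mul_ite, Finset.sum_ite_eq']

lemma wE_mul_wA_apply_congr {h j m : ℕ} (hmh : m < h) (hhd : h ≤ d) (hmj : m < j) (hjd : j ≤ d)
    {x z : ∀ k : Fin d, Fin (n k)} (hxz : ∀ k : Fin d, m ≤ (k : ℕ) → x k = z k)
    (y : ∀ k : Fin d, Fin (n k)) :
    (wE d n hn h * wA d n j) z y = (wE d n hn h * wA d n j) x y := by
  simp only [wE_mul_apply, wA, Matrix.of_apply]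
  rw [wRel_congr hmh hhd (fun _ _ => rfl) fun k hk => (hxz k hk).symm,
    wRel_congr hmj hjd (fun k hk => (hxz k hk).symm) fun _ _ => rfl]

lemma wE_mul_wA_mul_wE {j h : ℕ} (hjh : j < h) (hhd : h ≤ d) :
    wE d n hn h * wA d n j * wE d n hn h = wE d n hn h * wA d n j := by
  ext x y
  rw [mul_wE_apply, wE_mul_apply]
  simp only [wA, Matrix.of_apply]
  by_cases hxy : wRel d n j x y
  · rw [wRel_congr hjh hhd (fun _ _ => rfl) fun k hk => (eq_of_wRel hxy k hk).symm]
    split_ifs <;> rfl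
  · simp [hxy]

end WreathScheme

/-- For the scheme `K_{n_1} ≀ ⋯ ≀ K_{n_d}` and indices with
`1 ≤ i < j < h ≤ d`,
`A_i E_h^* A_j = (n_i - 1)(∏_{k=1}^{i-1} n_k) E_h^* A_j E_h^*`. -/
theorem AEA_below_wreath (d : ℕ) (n : Fin d → ℕ) (hn : ∀ k, 2 ≤ n k)
    (i j h : ℕ) (hi1 : 1 ≤ i) (hij : i < j) (hjh : j < h) (hhd : h ≤ d) :
    wA d n i * wE d n hn h * wA d n j =
      (((n ⟨i - 1, by omega⟩ : ℂ) - 1) *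
          ∏ l ∈ Finset.univ.filter (fun l : Fin d => (l : ℕ) < i - 1), (n l : ℂ)) •
        (wE d n hn h * wA d n j * wE d n hn h) := by
  rw [mul_assoc, wA_mul_of_agree hi1 (by omega) _ fun x z y hxz =>
      wE_mul_wA_apply_congr hn (by omega) hhd hij (by omega) hxz y,
    wE_mul_wA_mul_wE hn hjh hhd]
end
end

section
/- For the scheme K_{n_1} ≀ K_{n_2} ≀ ⋯ ≀ K_{n_d}, the Terwilliger algebra coincides with the linear span of the triple products: the underlying set of the subalgebra T of Matrix X X ℂ equals T_0. Equivalently, for all 0 ≤ i, j, h ≤ d the matrix A_i E_h^* A_j lies in T_0 (the scheme is triply regular). -/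
open scoped Classical

noncomputable section

/-!
A matrix lies in `T₀` exactly when its `(y, z)` entry depends only on the relation indices of
`(x₀, y)`, `(y, z)` and `(x₀, z)`. These matrices are closed under multiplication, because the
relation index is an ultrametric on `X` and every index-preserving correspondence between two
families of points extends to an index-preserving bijection of `X`: permute each coordinate `k`
by a permutation that depends only on the coordinates above `k`. Hence `T₀` is a subalgebra, and
it contains the generators of `T`.
-/

theorem Equiv.Perm.exists_forall_apply_eq {ι α : Type*} [Finite α] (a b : ι → α)
    (h : ∀ i j, a i = a j ↔ b i = b j) : ∃ σ : Equiv.Perm α, ∀ i, σ (a i) = b i := by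
  have : Fintype α := Fintype.ofFinite α
  have hb : b.FactorsThrough a := fun i j hij => (h i j).mp hij
  obtain ⟨σ, hσ⟩ := Set.MapsTo.exists_equiv_extend_of_card_eq (t := Finset.univ)
    (f := Function.extend a b id) (s := Set.range a) Finset.card_univ.symm
    (fun _ _ => Finset.mem_coe.mpr (Finset.mem_univ _)) (by
      rintro _ ⟨i, rfl⟩ _ ⟨j, rfl⟩ hij
      rw [hb.extend_apply, hb.extend_apply] at hij
      exact (h i j).mpr hij)
  refine ⟨σ.trans (Equiv.subtypeUnivEquiv Finset.mem_univ), fun i => ?_⟩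
  simp [hσ _ (Set.mem_range_self i), hb.extend_apply]

namespace WreathProduct

variable {d : ℕ} {α : Fin d → Type*}

def diffLevel (x y : ∀ k, α k) : ℕ :=
  (Finset.univ.filter fun k => x k ≠ y k).sup fun k => (k : ℕ) + 1

def AgreeFrom (m : ℕ) (x y : ∀ k, α k) : Prop :=
  ∀ k : Fin d, m ≤ k → x k = y k

theorem AgreeFrom.symm {m : ℕ} {x y : ∀ k, α k} (h : AgreeFrom m x y) : AgreeFrom m y x :=
  fun k hk => (h k hk).symm

theorem AgreeFrom.mono {m m' : ℕ} {x y : ∀ k, α k} (h : AgreeFrom m x y) (hm : m ≤ m') :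
    AgreeFrom m' x y :=
  fun k hk => h k (hm.trans hk)

theorem diffLevel_le_iff {x y : ∀ k, α k} {m : ℕ} :
    diffLevel x y ≤ m ↔ AgreeFrom m x y := by
  simp only [diffLevel, Finset.sup_le_iff, Finset.mem_filter, Finset.mem_univ, true_and,
    AgreeFrom]
  refine forall_congr' fun k => ?_
  rw [not_imp_comm, not_le, Nat.lt_succ_iff]

theorem diffLevel_le_dim (x y : ∀ k, α k) : diffLevel x y ≤ d :=
  diffLevel_le_iff.mpr fun k hk => absurd k.isLt (by omega)

theorem diffLevel_eq_zero_iff {x y : ∀ k, α k} : diffLevel x y = 0 ↔ x = y := by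
  rw [← Nat.le_zero, diffLevel_le_iff, funext_iff]
  exact forall_congr' fun k => ⟨fun h => h (Nat.zero_le _), fun h _ => h⟩

@[simp]
theorem diffLevel_self (x : ∀ k, α k) : diffLevel x x = 0 :=
  diffLevel_eq_zero_iff.mpr rfl

theorem diffLevel_comm (x y : ∀ k, α k) : diffLevel x y = diffLevel y x :=
  eq_of_forall_ge_iff fun _ => by
    rw [diffLevel_le_iff, diffLevel_le_iff]
    exact ⟨AgreeFrom.symm, AgreeFrom.symm⟩

theorem apply_eq_apply_iff_diffLevel_le {x y : ∀ k, α k} {k : Fin d}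
    (h : AgreeFrom (k + 1) x y) : x k = y k ↔ diffLevel x y ≤ k := by
  rw [diffLevel_le_iff]
  refine ⟨fun hk j hj => ?_, fun hk => hk k le_rfl⟩
  rcases hj.eq_or_lt with hjk | hjk
  · rwa [← Fin.ext hjk]
  · exact h j hjk

theorem diffLevel_eq_of_forall_apply_eq_apply_iff {β : Fin d → Type*}
    {g : (∀ k, α k) → ∀ k, β k}
    (hg : ∀ (k : Fin d) u v, AgreeFrom (k + 1) u v → (g u k = g v k ↔ u k = v k))
    (u v : ∀ k, α k) : diffLevel (g u) (g v) = diffLevel u v := by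
  refine eq_of_forall_ge_iff fun m => ?_
  rw [diffLevel_le_iff, diffLevel_le_iff]
  refine ⟨fun hgm => ?_, fun h k hk => (hg k u v (h.mono (by omega))).mpr (h k hk)⟩
  by_contra hm
  rw [← diffLevel_le_iff, not_le] at hm
  -- the top coordinate at which `u` and `v` differ
  set k : Fin d := ⟨diffLevel u v - 1, by have := diffLevel_le_dim u v; omega⟩
  have hk : AgreeFrom (k + 1) u v := diffLevel_le_iff.mp (by simp only [k]; omega)
  have hne : u k ≠ v k := by
    rw [Ne, apply_eq_apply_iff_diffLevel_le hk]
    simp only [k]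
    omega
  exact hne ((hg k u v hk).mp (hgm k (by simp only [k]; omega)))

def cellType (x₀ : ∀ k, α k) (yz : (∀ k, α k) × (∀ k, α k)) : ℕ × ℕ × ℕ :=
  (diffLevel x₀ yz.1, diffLevel yz.1 yz.2, diffLevel x₀ yz.2)

section Homogeneity

variable [∀ k, Finite (α k)]

theorem exists_bijective_diffLevel_eq {ι : Type*} (p q : ι → ∀ k, α k)
    (h : ∀ i j, diffLevel (p i) (p j) = diffLevel (q i) (q j)) :
    ∃ g : (∀ k, α k) → ∀ k, α k, g.Bijective ∧
      (∀ u v, diffLevel (g u) (g v) = diffLevel u v) ∧ ∀ i, g (p i) = q i := by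
  have hσ : ∀ (k : Fin d) (w : ∀ j : {j : Fin d // k < j}, α j), ∃ σ : Equiv.Perm (α k),
      ∀ i, (∀ j : {j : Fin d // k < j}, p i j = w j) → σ (p i k) = q i k := by
    intro k w
    have hpq : ∀ i i' : {i // ∀ j : {j : Fin d // k < j}, p i j = w j},
        p i k = p i' k ↔ q i k = q i' k := by
      rintro ⟨i, hi⟩ ⟨i', hi'⟩
      have hp : AgreeFrom (k + 1) (p i) (p i') :=
        fun j hj => (hi ⟨j, by omega⟩).trans (hi' ⟨j, by omega⟩).symm
      have hq : AgreeFrom (k + 1) (q i) (q i') :=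
        diffLevel_le_iff.mp (h i i' ▸ diffLevel_le_iff.mpr hp)
      rw [apply_eq_apply_iff_diffLevel_le hp, apply_eq_apply_iff_diffLevel_le hq, h]
    obtain ⟨σ, hσ⟩ := Equiv.Perm.exists_forall_apply_eq _ _ hpq
    exact ⟨σ, fun i hi => hσ ⟨i, hi⟩⟩
  choose σ hσ using hσ
  set g : (∀ k, α k) → ∀ k, α k := fun u k => σ k (fun j => u j) (u k)
  have hg : ∀ (k : Fin d) u v, AgreeFrom (k + 1) u v → (g u k = g v k ↔ u k = v k) := by
    intro k u v huv
    have hup : (fun j : {j : Fin d // k < j} => u j) = fun j : {j : Fin d // k < j} => v j :=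
      funext fun j => huv j (by have := j.2; omega)
    simp only [g, hup, Equiv.apply_eq_iff_eq]
  have hlevel := diffLevel_eq_of_forall_apply_eq_apply_iff hg
  refine ⟨g, Finite.injective_iff_bijective.mp fun u v huv => ?_, hlevel,
    fun i => funext fun k => hσ k _ i fun _ => rfl⟩
  rw [← diffLevel_eq_zero_iff, ← hlevel, huv, diffLevel_self]

theorem exists_bijective_of_cellType_eq {x₀ y z y' z' : ∀ k, α k}
    (h : cellType x₀ (y, z) = cellType x₀ (y', z')) :
    ∃ g : (∀ k, α k) → ∀ k, α k, g.Bijective ∧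
      (∀ u v, cellType x₀ (g u, g v) = cellType x₀ (u, v)) ∧ g y = y' ∧ g z = z' := by
  simp only [cellType, Prod.mk.injEq] at h
  obtain ⟨h₁, h₂, h₃⟩ := h
  obtain ⟨g, hg, hlevel, hpq⟩ := exists_bijective_diffLevel_eq ![x₀, y, z] ![x₀, y', z'] (by
    intro i j
    fin_cases i <;> fin_cases j <;>
      simp [h₁, h₂, h₃, diffLevel_comm y x₀, diffLevel_comm z x₀, diffLevel_comm z y,
        diffLevel_comm y' x₀, diffLevel_comm z' x₀, diffLevel_comm z' y'])
  refine ⟨g, hg, fun u v => ?_, hpq 1, hpq 2⟩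
  have hx₀ : g x₀ = x₀ := hpq 0
  rw [cellType, cellType, ← hlevel x₀ u, ← hlevel u v, ← hlevel x₀ v, hx₀]

end Homogeneity

theorem wRel_iff_diffLevel {n : Fin d → ℕ} {i : ℕ} (hi : i ≤ d) {x y : ∀ k, Fin (n k)} :
    wRel d n i x y ↔ diffLevel x y = i := by
  unfold wRel
  split_ifs with h
  · have hagree : (∀ k : Fin d, i - 1 < (k : ℕ) → x k = y k) ↔ AgreeFrom i x y :=
      forall_congr' fun k => imp_congr_left (by omega)
    have hk : ∀ hxy : AgreeFrom i x y,
        x ⟨i - 1, by omega⟩ = y ⟨i - 1, by omega⟩ ↔ diffLevel x y ≤ i - 1 :=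
      fun hxy => apply_eq_apply_iff_diffLevel_le (hxy.mono (by dsimp only; omega))
    rw [hagree]
    constructor
    · rintro ⟨hne, hxy⟩
      rw [Ne, hk hxy] at hne
      have := diffLevel_le_iff.mpr hxy
      omega
    · intro hlevel
      have hxy := diffLevel_le_iff.mp hlevel.le
      rw [Ne, hk hxy]
      exact ⟨by omega, hxy⟩
  · rw [show i = 0 by omega, diffLevel_eq_zero_iff]

section Cellwise

variable {R : Type*} [CommSemiring R]

variable (R) in
def IsCellwise (x₀ : ∀ k, α k) (M : Matrix (∀ k, α k) (∀ k, α k) R) : Prop :=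
  (fun yz : (∀ k, α k) × (∀ k, α k) => M yz.1 yz.2).FactorsThrough (cellType x₀)

theorem isCellwise_diagonal_const [∀ k, DecidableEq (α k)] (x₀ : ∀ k, α k) (r : R) :
    IsCellwise R x₀ (Matrix.diagonal fun _ => r) := by
  rintro ⟨y, z⟩ ⟨y', z'⟩ h
  simp only [cellType, Prod.mk.injEq] at h
  simp only [Matrix.diagonal_apply, ← diffLevel_eq_zero_iff, h.2.1]

theorem IsCellwise.mul [∀ k, Fintype (α k)] {x₀ : ∀ k, α k}
    {M N : Matrix (∀ k, α k) (∀ k, α k) R}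
    (hM : IsCellwise R x₀ M) (hN : IsCellwise R x₀ N) : IsCellwise R x₀ (M * N) := by
  rintro ⟨y, z⟩ ⟨y', z'⟩ h
  obtain ⟨g, hg, hcell, rfl, rfl⟩ := exists_bijective_of_cellType_eq h
  simp only [Matrix.mul_apply]
  exact Fintype.sum_bijective g hg _ _ fun w =>
    congr_arg₂ (· * ·) (hM (hcell y w).symm) (hN (hcell w z).symm)

variable (R) in
def cellwiseSubalgebra [∀ k, Fintype (α k)] [∀ k, DecidableEq (α k)] (x₀ : ∀ k, α k) :
    Subalgebra R (Matrix (∀ k, α k) (∀ k, α k) R) where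
  carrier := {M | IsCellwise R x₀ M}
  mul_mem' := IsCellwise.mul
  one_mem' := by simpa using isCellwise_diagonal_const x₀ (1 : R)
  add_mem' hM hN _ _ h := congr_arg₂ (· + ·) (hM h) (hN h)
  zero_mem' _ _ _ := rfl
  algebraMap_mem' r := isCellwise_diagonal_const x₀ r

end Cellwise

variable {n : Fin d → ℕ}

theorem wA_mem_cellwiseSubalgebra (x₀ : ∀ k, Fin (n k)) {j : ℕ} (hj : j ≤ d) :
    wA d n j ∈ cellwiseSubalgebra ℂ x₀ := by
  rintro ⟨y, z⟩ ⟨y', z'⟩ h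
  simp only [cellType, Prod.mk.injEq] at h
  simp only [wA, Matrix.of_apply, wRel_iff_diffLevel hj, h.2.1]

theorem wE_mem_cellwiseSubalgebra (hn : ∀ k, 2 ≤ n k) {i : ℕ} (hi : i ≤ d) :
    wE d n hn i ∈ cellwiseSubalgebra ℂ (wBase d n hn) := by
  rintro ⟨y, z⟩ ⟨y', z'⟩ h
  simp only [cellType, Prod.mk.injEq] at h
  simp only [wE, Matrix.of_apply, wRel_iff_diffLevel hi, ← diffLevel_eq_zero_iff, h.1, h.2.1]

theorem wE_eq_diagonal (hn : ∀ k, 2 ≤ n k) (i : ℕ) :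
    wE d n hn i = Matrix.diagonal fun y => if wRel d n i (wBase d n hn) y then 1 else 0 := by
  ext y z
  by_cases h : y = z <;> simp [wE, h]

theorem wE_mul_wA_mul_wE_apply (hn : ∀ k, 2 ≤ n k) {t : ℕ × ℕ × ℕ} (h₁ : t.1 ≤ d)
    (h₂ : t.2.1 ≤ d) (h₃ : t.2.2 ≤ d) (y z : ∀ k, Fin (n k)) :
    (wE d n hn t.1 * wA d n t.2.1 * wE d n hn t.2.2) y z =
      if cellType (wBase d n hn) (y, z) = t then 1 else 0 := by
  obtain ⟨a, b, c⟩ := t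
  rw [wE_eq_diagonal, wE_eq_diagonal, Matrix.mul_diagonal, Matrix.diagonal_mul]
  simp only [wA, Matrix.of_apply, wRel_iff_diffLevel h₁, wRel_iff_diffLevel h₂,
    wRel_iff_diffLevel h₃, mul_ite, mul_one, mul_zero, ← ite_and, cellType, Prod.mk.injEq]
  exact if_congr (by tauto) rfl rfl

theorem IsCellwise.eq_sum_smul_wE_mul_wA_mul_wE (hn : ∀ k, 2 ≤ n k)
    {M : Matrix (∀ k, Fin (n k)) (∀ k, Fin (n k)) ℂ} (hM : IsCellwise ℂ (wBase d n hn) M) :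
    M = ∑ t ∈ Finset.Iic d ×ˢ Finset.Iic d ×ˢ Finset.Iic d,
      Function.extend (cellType (wBase d n hn)) (fun yz => M yz.1 yz.2) 0 t •
        (wE d n hn t.1 * wA d n t.2.1 * wE d n hn t.2.2) := by
  ext y z
  have hmem :
      cellType (wBase d n hn) (y, z) ∈ Finset.Iic d ×ˢ Finset.Iic d ×ˢ Finset.Iic d := by
    simp [cellType, diffLevel_le_dim]
  rw [Matrix.sum_apply, Finset.sum_eq_single_of_mem _ hmem fun t ht hne => ?_]
  · rw [Matrix.smul_apply, wE_mul_wA_mul_wE_apply hn (diffLevel_le_dim _ _)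
      (diffLevel_le_dim _ _) (diffLevel_le_dim _ _), if_pos rfl, hM.extend_apply, smul_eq_mul,
      mul_one]
  simp only [Finset.mem_product, Finset.mem_Iic] at ht
  rw [Matrix.smul_apply, wE_mul_wA_mul_wE_apply hn ht.1 ht.2.1 ht.2.2, if_neg (Ne.symm hne),
    smul_zero]

theorem wT0_eq_toSubmodule_cellwiseSubalgebra (hn : ∀ k, 2 ≤ n k) :
    wT0 d n hn = Subalgebra.toSubmodule (cellwiseSubalgebra ℂ (wBase d n hn)) := by
  refine le_antisymm (Submodule.span_le.mpr ?_) fun M hM => ?_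
  · rintro _ ⟨a, b, c, ha, hb, hc, rfl⟩
    rw [SetLike.mem_coe, Subalgebra.mem_toSubmodule]
    exact mul_mem (mul_mem (wE_mem_cellwiseSubalgebra hn ha) (wA_mem_cellwiseSubalgebra _ hb))
      (wE_mem_cellwiseSubalgebra hn hc)
  rw [IsCellwise.eq_sum_smul_wE_mul_wA_mul_wE hn hM]
  refine Submodule.sum_mem _ fun t ht => Submodule.smul_mem _ _ (Submodule.subset_span ?_)
  simp only [Finset.mem_product, Finset.mem_Iic] at ht
  exact ⟨t.1, t.2.1, t.2.2, ht.1, ht.2.1, ht.2.2, rfl⟩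

theorem wT0_le_toSubmodule_wT (hn : ∀ k, 2 ≤ n k) :
    wT0 d n hn ≤ Subalgebra.toSubmodule (wT d n hn) := by
  refine Submodule.span_le.mpr ?_
  rintro _ ⟨a, b, c, ha, hb, hc, rfl⟩
  rw [SetLike.mem_coe, Subalgebra.mem_toSubmodule]
  exact mul_mem (mul_mem (Algebra.subset_adjoin (Or.inr ⟨a, ha, rfl⟩))
    (Algebra.subset_adjoin (Or.inl ⟨b, hb, rfl⟩)))
    (Algebra.subset_adjoin (Or.inr ⟨c, hc, rfl⟩))

end WreathProduct

open WreathProduct in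
theorem triply_regular_wreath_general (d : ℕ)
    (n : Fin d → ℕ) (hn : ∀ k, 2 ≤ n k) :
    Subalgebra.toSubmodule (wT d n hn) = wT0 d n hn ∧
      ∀ i j h : ℕ, i ≤ d → j ≤ d → h ≤ d →
        wA d n i * wE d n hn h * wA d n j ∈ wT0 d n hn := by
  have hwA (i : ℕ) (hi : i ≤ d) := wA_mem_cellwiseSubalgebra (wBase d n hn) hi
  have hwE (i : ℕ) (hi : i ≤ d) := wE_mem_cellwiseSubalgebra hn hi
  have hT : wT d n hn ≤ cellwiseSubalgebra ℂ (wBase d n hn) :=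
    Algebra.adjoin_le <| Set.union_subset (by rintro _ ⟨i, hi, rfl⟩; exact hwA i hi)
      (by rintro _ ⟨i, hi, rfl⟩; exact hwE i hi)
  have hT0 := wT0_le_toSubmodule_wT hn
  rw [wT0_eq_toSubmodule_cellwiseSubalgebra] at hT0 ⊢
  exact ⟨le_antisymm (Subalgebra.toSubmodule.monotone hT) hT0,
    fun i j h hi hj hh =>
      (Subalgebra.mem_toSubmodule _).mpr (mul_mem (mul_mem (hwA i hi) (hwE h hh)) (hwA j hj))⟩

/-- For the scheme `K_{n_1} ≀ ⋯ ≀ K_{n_d}`, the Terwilliger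
algebra coincides with the linear span of the triple products:
`T = T₀` as sets; equivalently, `A_i E_h^* A_j ∈ T₀` for all
`0 ≤ i, j, h ≤ d` (the scheme is triply regular). -/
theorem triply_regular_wreath (d : ℕ) (hd : 1 ≤ d)
    (n : Fin d → ℕ) (hn : ∀ k, 2 ≤ n k) :
    Subalgebra.toSubmodule (wT d n hn) = wT0 d n hn ∧
      ∀ i j h : ℕ, i ≤ d → j ≤ d → h ≤ d →
        wA d n i * wE d n hn h * wA d n j ∈ wT0 d n hn :=
  triply_regular_wreath_general d n hn
end
end

section
/- The Terwilliger algebra T of the one-class association scheme K_m is isomorphic as a ℂ-algebra to M_2(ℂ) if m = 2, and to M_2(ℂ) × ℂ (i.e., M_2(ℂ) ⊕ M_1(ℂ)) if m ≥ 3. In particular dim_ℂ T = 4 if m = 2 and dim_ℂ T = 5 if m ≥ 3. -/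
open scoped Classical

noncomputable section

/-- The adjacency matrix `A_1 = J - I` of the complete graph `K_m`. -/
def kA1 (m : ℕ) : Matrix (Fin m) (Fin m) ℂ :=
  Matrix.of fun x y => if x ≠ y then 1 else 0

/-- The dual idempotent `E_0^*` with respect to the base vertex `x₀ = 1`
(0-indexed: `0`). -/
def kE0 (m : ℕ) (hm : 2 ≤ m) : Matrix (Fin m) (Fin m) ℂ :=
  Matrix.of fun x y => if x = y ∧ x = (⟨0, by omega⟩ : Fin m) then 1 else 0

/-- The Terwilliger algebra of the one-class scheme `K_m`: the unital
subalgebra of `Matrix (Fin m) (Fin m) ℂ` generated by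
`A_0 = 1`, `A_1 = J - I`, `E_0^*` and `E_1^* = 1 - E_0^*`. -/
def kT (m : ℕ) (hm : 2 ≤ m) : Subalgebra ℂ (Matrix (Fin m) (Fin m) ℂ) :=
  Algebra.adjoin ℂ {1, kA1 m, kE0 m hm, 1 - kE0 m hm}

/-! Let `A` be the characteristic matrix of the partition `{x₀}, X \ {x₀}` and `B` the matrix
averaging over its two cells, so that `B A = 1`. Then `(M, c) ↦ A M B + c (1 - A B)` is a unital
algebra map `M₂(ℂ) × ℂ → Mat_X(ℂ)`; it sends `(E₁₁, 0)` to `E₀^*` and `(N - 1, -1)` to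
`A₁ = J - I`, where both rows of `N` are `(1, m - 1)`. These two elements generate `M₂(ℂ) × ℂ`, so
the image of the map is `T`. Since `B (A M B + c (1 - A B)) A = M`, the map is injective as soon as
`A B ≠ 1`, which comparing traces (`2` against `m`) gives for `m ≥ 3`; for `m = 2` instead
`A B = 1` and the image is all of `Mat_X(ℂ)`. -/

namespace Matrix

open Finset

section CornerAlgHom

variable {n ι K : Type*} [Fintype n] [Fintype ι] [DecidableEq n] [DecidableEq ι] [Field K]
  {A : Matrix n ι K} {B : Matrix ι n K}

theorem one_sub_mul_mul_of_mul_eq_one (hBA : B * A = 1) : (1 - A * B) * A = 0 := by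
  rw [Matrix.sub_mul, Matrix.mul_assoc, hBA, Matrix.one_mul, Matrix.mul_one, sub_self]

theorem mul_one_sub_mul_of_mul_eq_one (hBA : B * A = 1) : B * (1 - A * B) = 0 := by
  rw [Matrix.mul_sub, ← Matrix.mul_assoc, hBA, Matrix.one_mul, Matrix.mul_one, sub_self]

def cornerAlgHom (hBA : B * A = 1) : Matrix ι ι K × K →ₐ[K] Matrix n n K where
  toFun p := A * p.1 * B + p.2 • (1 - A * B)
  map_one' := by simp
  map_mul' := by
    rintro ⟨M, c⟩ ⟨N, d⟩
    have hQQ : (1 - A * B) * (1 - A * B) = 1 - A * B := by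
      rw [Matrix.sub_mul (1 : Matrix n n K), Matrix.one_mul, Matrix.mul_assoc,
        mul_one_sub_mul_of_mul_eq_one hBA, Matrix.mul_zero, sub_zero]
    simp only [Matrix.add_mul, Matrix.mul_add, Matrix.smul_mul, Matrix.mul_smul,
      Matrix.mul_assoc, mul_one_sub_mul_of_mul_eq_one hBA, hQQ]
    simp only [← Matrix.mul_assoc, one_sub_mul_mul_of_mul_eq_one hBA, hBA]
    simp [Matrix.mul_assoc, smul_smul, mul_comm]
  map_zero' := by simp
  map_add' := by
    rintro ⟨M, c⟩ ⟨N, d⟩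
    simp only [Prod.mk_add_mk, Matrix.mul_add, Matrix.add_mul, add_smul]
    abel
  commutes' r := by
    simp [Algebra.algebraMap_eq_smul_one, smul_sub]

theorem cornerAlgHom_apply (hBA : B * A = 1) (p : Matrix ι ι K × K) :
    cornerAlgHom hBA p = A * p.1 * B + p.2 • (1 - A * B) := rfl

theorem mul_cornerAlgHom_mul (hBA : B * A = 1) (p : Matrix ι ι K × K) :
    B * cornerAlgHom hBA p * A = p.1 := by
  rw [cornerAlgHom_apply, Matrix.mul_add, Matrix.add_mul, Matrix.mul_smul, Matrix.smul_mul,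
    mul_one_sub_mul_of_mul_eq_one hBA, Matrix.zero_mul, smul_zero, add_zero,
    ← Matrix.mul_assoc, ← Matrix.mul_assoc, hBA, Matrix.one_mul, Matrix.mul_assoc, hBA,
    Matrix.mul_one]

theorem cornerAlgHom_injective (hBA : B * A = 1) (hAB : A * B ≠ 1) :
    Function.Injective (cornerAlgHom hBA) := by
  rw [injective_iff_map_eq_zero]
  rintro ⟨M, c⟩ h
  obtain rfl : M = 0 := by simpa [h] using (mul_cornerAlgHom_mul hBA (M, c)).symm
  have hc : c • (1 - A * B) = 0 := by simpa [cornerAlgHom_apply] using h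
  simp [(smul_eq_zero.mp hc).resolve_right (sub_ne_zero.mpr hAB.symm)]

theorem range_cornerAlgHom_eq_top (hBA : B * A = 1) (hAB : A * B = 1) :
    (cornerAlgHom hBA).range = ⊤ := by
  refine eq_top_iff.mpr fun X _ => (AlgHom.mem_range _).mpr ⟨(B * X * A, 0), ?_⟩
  rw [cornerAlgHom_apply, zero_smul, add_zero, ← Matrix.mul_assoc, ← Matrix.mul_assoc, hAB,
    Matrix.one_mul, Matrix.mul_assoc, hAB, Matrix.mul_one]

theorem mul_ne_one_of_card_ne [CharZero K] (hBA : B * A = 1)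
    (hcard : Fintype.card ι ≠ Fintype.card n) : A * B ≠ 1 := by
  intro hAB
  have htr := congrArg trace hAB
  rw [trace_mul_comm, hBA, trace_one, trace_one] at htr
  exact hcard (by exact_mod_cast htr)

end CornerAlgHom

section Fibers

variable {n ι : Type*} (K : Type*) [Fintype n] [DecidableEq ι] [Field K] (π : n → ι)

def fiberIndicator : Matrix n ι K := of fun x i => if π x = i then 1 else 0

def fiberAverage : Matrix ι n K := of fun i y => if π y = i then (#{x | π x = i} : K)⁻¹ else 0

variable {K π}

theorem fiberAverage_mul_fiberIndicator (hπ : ∀ i, (#{x | π x = i} : K) ≠ 0) :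
    fiberAverage K π * fiberIndicator K π = 1 := by
  ext i j
  have hterm : ∀ y, fiberAverage K π i y * fiberIndicator K π y j =
      if π y = i then (if i = j then (#{x | π x = i} : K)⁻¹ else 0) else 0 := by
    intro y
    by_cases h : π y = i <;> simp [fiberAverage, fiberIndicator, h]
  rw [mul_apply, Finset.sum_congr rfl fun y _ => hterm y, ← Finset.sum_filter]
  rcases eq_or_ne i j with rfl | hij
  · simp [hπ]
  · simp [hij]

theorem fiberIndicator_mul_mul_fiberAverage_apply [Fintype ι] (M : Matrix ι ι K) (x y : n) :
    (fiberIndicator K π * M * fiberAverage K π) x y =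
      M (π x) (π y) * (#{z | π z = π y} : K)⁻¹ := by
  simp [mul_apply, fiberAverage, fiberIndicator]

theorem fiberIndicator_mul_card_mul_fiberAverage [Fintype ι]
    (hπ : ∀ i, (#{x | π x = i} : K) ≠ 0) :
    fiberIndicator K π * (of fun _ j => (#{x | π x = j} : K) : Matrix ι ι K) *
      fiberAverage K π = (of fun _ _ => 1 : Matrix n n K) := by
  ext x y
  simp [fiberIndicator_mul_mul_fiberAverage_apply, hπ]

end Fibers

theorem adjoin_single_zero_zero_pair_eq_top {K : Type*} [Field K] {a : K} (ha : a ≠ 0) :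
    Algebra.adjoin K {((single 0 0 1 : Matrix (Fin 2) (Fin 2) K), (0 : K)),
      (!![1, a; 1, a] - 1, -1)} = ⊤ := by
  set S := Algebra.adjoin K {((single 0 0 1 : Matrix (Fin 2) (Fin 2) K), (0 : K)),
      (!![1, a; 1, a] - 1, -1)}
  have hx : ((single 0 0 1 : Matrix (Fin 2) (Fin 2) K), (0 : K)) ∈ S :=
    Algebra.subset_adjoin (by simp)
  have hy : ((!![1, a; 1, a] - 1 : Matrix (Fin 2) (Fin 2) K), (-1 : K)) ∈ S :=
    Algebra.subset_adjoin (by simp)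
  have h10 : ((single 1 0 1 : Matrix (Fin 2) (Fin 2) K), (0 : K)) ∈ S := by
    convert mul_mem hy hx using 1
    ext i j : 2
    · fin_cases i <;> fin_cases j <;> simp [mul_apply, Fin.sum_univ_two]
    · simp
  have h01 : ((single 0 1 1 : Matrix (Fin 2) (Fin 2) K), (0 : K)) ∈ S := by
    convert Subalgebra.smul_mem S (mul_mem hx hy) a⁻¹ using 1
    ext i j : 2
    · fin_cases i <;> fin_cases j <;> simp [mul_apply, Fin.sum_univ_two, ha]
    · simp
  have hsingle : ∀ i j, ((single i j 1 : Matrix (Fin 2) (Fin 2) K), (0 : K)) ∈ S := by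
    have hcol : ∀ i, ((single i 0 1 : Matrix (Fin 2) (Fin 2) K), (0 : K)) ∈ S := by
      intro i; fin_cases i; exacts [hx, h10]
    have hrow : ∀ j, ((single 0 j 1 : Matrix (Fin 2) (Fin 2) K), (0 : K)) ∈ S := by
      intro j; fin_cases j; exacts [hx, h01]
    intro i j
    convert mul_mem (hcol i) (hrow j) using 1
    simp
  have hsnd : ((0 : Matrix (Fin 2) (Fin 2) K), (1 : K)) ∈ S := by
    convert sub_mem (sub_mem (one_mem S) (hsingle 0 0)) (hsingle 1 1) using 1
    ext i j : 2
    · fin_cases i <;> fin_cases j <;> simp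
    · simp
  refine eq_top_iff.mpr fun ⟨M, c⟩ _ => ?_
  have hM : ((M, c) : Matrix (Fin 2) (Fin 2) K × K) =
      ∑ i, ∑ j, M i j • ((single i j 1 : Matrix (Fin 2) (Fin 2) K), (0 : K)) + c • (0, 1) := by
    ext i j : 2
    · fin_cases i <;> fin_cases j <;> simp [Fin.sum_univ_two]
    · simp
  rw [hM]
  exact add_mem (Subalgebra.sum_mem _ fun i _ => Subalgebra.sum_mem _ fun j _ =>
    Subalgebra.smul_mem _ (hsingle i j) _) (Subalgebra.smul_mem _ hsnd _)

end Matrix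

open Matrix Finset

section TerwilligerKm

variable {m : ℕ} (hm : 2 ≤ m)

/-- The distance `∂(x₀, x)` in `K_m`; its fibres are the subconstituents of `x₀`. -/
def kDist (x : Fin m) : Fin 2 := if x = ⟨0, by omega⟩ then 0 else 1

theorem card_kDist_zero : #{x | kDist hm x = 0} = 1 :=
  card_eq_one.mpr ⟨⟨0, by omega⟩, by ext x; by_cases hx : x = ⟨0, by omega⟩ <;> simp [kDist, hx]⟩

theorem card_kDist_one : #{x | kDist hm x = 1} = m - 1 := by
  have : ({x | kDist hm x = 1} : Finset (Fin m)) = univ.erase ⟨0, by omega⟩ := by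
    ext x; by_cases hx : x = ⟨0, by omega⟩ <;> simp [kDist, hx]
  simp [this]

theorem card_kDist_ne_zero (i : Fin 2) : (#{x | kDist hm x = i} : ℂ) ≠ 0 := by
  fin_cases i
  · simp [card_kDist_zero]
  · simp [card_kDist_one]; omega

def kCornerAlgHom : Matrix (Fin 2) (Fin 2) ℂ × ℂ →ₐ[ℂ] Matrix (Fin m) (Fin m) ℂ :=
  cornerAlgHom (fiberAverage_mul_fiberIndicator (card_kDist_ne_zero hm))

theorem kCornerAlgHom_single_zero_zero : kCornerAlgHom hm (single 0 0 1, 0) = kE0 m hm := by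
  ext x y
  rw [kCornerAlgHom, cornerAlgHom_apply, zero_smul, add_zero,
    fiberIndicator_mul_mul_fiberAverage_apply]
  by_cases hy : y = ⟨0, by omega⟩
  · subst hy
    rw [show kDist hm ⟨0, by omega⟩ = 0 from if_pos rfl, card_kDist_zero]
    by_cases hx : x = ⟨0, by omega⟩ <;> simp [kDist, kE0, hx]
  · rw [show kDist hm y = 1 from if_neg hy]
    simp only [single_apply, kE0, of_apply]
    grind

theorem kCornerAlgHom_ones_sub_one :
    kCornerAlgHom hm (!![1, ((m - 1 : ℕ) : ℂ); 1, ((m - 1 : ℕ) : ℂ)] - 1, -1) = kA1 m := by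
  have hN : !![1, ((m - 1 : ℕ) : ℂ); 1, ((m - 1 : ℕ) : ℂ)] =
      of fun _ j => (#{x | kDist hm x = j} : ℂ) := by
    ext i j; fin_cases i <;> fin_cases j <;> simp [card_kDist_zero, card_kDist_one]
  have hA1 : kA1 m = of (fun _ _ => 1) - 1 := by
    ext x y; by_cases h : x = y <;> simp [kA1, h, one_apply]
  have hsplit : ((!![1, ((m - 1 : ℕ) : ℂ); 1, ((m - 1 : ℕ) : ℂ)] - 1, -1) :
      Matrix (Fin 2) (Fin 2) ℂ × ℂ) = (!![1, ((m - 1 : ℕ) : ℂ); 1, ((m - 1 : ℕ) : ℂ)], 0) - 1 :=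
    Prod.ext rfl (zero_sub 1).symm
  rw [hsplit, map_sub, map_one, hA1, hN, kCornerAlgHom, cornerAlgHom_apply, zero_smul, add_zero,
    fiberIndicator_mul_card_mul_fiberAverage (card_kDist_ne_zero hm)]

theorem kT_eq_range : kT m hm = (kCornerAlgHom hm).range := by
  apply le_antisymm
  · refine Algebra.adjoin_le ?_
    rintro _ (rfl | rfl | rfl | rfl)
    · exact one_mem _
    · exact kCornerAlgHom_ones_sub_one hm ▸ AlgHom.mem_range_self _ _
    · exact kCornerAlgHom_single_zero_zero hm ▸ AlgHom.mem_range_self _ _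
    · exact sub_mem (one_mem _) (kCornerAlgHom_single_zero_zero hm ▸ AlgHom.mem_range_self _ _)
  · have ha : ((m - 1 : ℕ) : ℂ) ≠ 0 := by norm_cast; omega
    rw [← Algebra.map_top, ← adjoin_single_zero_zero_pair_eq_top ha, AlgHom.map_adjoin,
      Set.image_pair, kCornerAlgHom_single_zero_zero, kCornerAlgHom_ones_sub_one]
    exact Algebra.adjoin_mono (by simp [Set.subset_def])

theorem kT_eq_top (h : m = 2) : kT m hm = ⊤ := by
  rw [kT_eq_range]
  exact range_cornerAlgHom_eq_top _ ((mul_eq_one_comm_of_equiv (finCongr h)).mpr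
    (fiberAverage_mul_fiberIndicator (card_kDist_ne_zero hm)))

theorem kCornerAlgHom_injective (h : 3 ≤ m) : Function.Injective (kCornerAlgHom hm) :=
  cornerAlgHom_injective _ <| mul_ne_one_of_card_ne
    (fiberAverage_mul_fiberIndicator (card_kDist_ne_zero hm)) (by simp; omega)

end TerwilligerKm

/-- The Terwilliger algebra of `K_m` is isomorphic to `M_2(ℂ)`
if `m = 2` and to `M_2(ℂ) × ℂ` if `m ≥ 3`; in particular its dimension is
`4` if `m = 2` and `5` if `m ≥ 3`. -/
theorem terwilliger_Km (m : ℕ) (hm : 2 ≤ m) :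
    (m = 2 → Nonempty (↥(kT m hm) ≃ₐ[ℂ] Matrix (Fin 2) (Fin 2) ℂ)) ∧
      (3 ≤ m → Nonempty (↥(kT m hm) ≃ₐ[ℂ] Matrix (Fin 2) (Fin 2) ℂ × ℂ)) ∧
      (m = 2 → Module.finrank ℂ ↥(kT m hm) = 4) ∧
      (3 ≤ m → Module.finrank ℂ ↥(kT m hm) = 5) := by
  have finrank_M2 : Module.finrank ℂ (Matrix (Fin 2) (Fin 2) ℂ) = 4 := by
    simp [Module.finrank_matrix]
  have iso2 (h : m = 2) : kT m hm ≃ₐ[ℂ] Matrix (Fin 2) (Fin 2) ℂ :=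
    (Subalgebra.equivOfEq _ _ (kT_eq_top hm h)).trans
      (Subalgebra.topEquiv.trans (reindexAlgEquiv ℂ ℂ (finCongr h)))
  have iso3 (h : 3 ≤ m) : kT m hm ≃ₐ[ℂ] Matrix (Fin 2) (Fin 2) ℂ × ℂ :=
    (Subalgebra.equivOfEq _ _ (kT_eq_range hm)).trans
      (AlgEquiv.ofInjective _ (kCornerAlgHom_injective hm h)).symm
  refine ⟨fun h => ⟨iso2 h⟩, fun h => ⟨iso3 h⟩, fun h => ?_, fun h => ?_⟩
  · rw [(iso2 h).toLinearEquiv.finrank_eq, finrank_M2]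
  · rw [(iso3 h).toLinearEquiv.finrank_eq, Module.finrank_prod, finrank_M2, Module.finrank_self]
end
end

section
/- For the wreath square (K_m)^{≀2}, the standard module ℂ^X decomposes as an orthogonal direct sum (with respect to the standard Hermitian inner product) of m^2 − 2 subspaces, each invariant under every matrix in the Terwilliger algebra T, exactly one of which has dimension 3 and the remaining m^2 − 3 of which have dimension 1; moreover the 3-dimensional subspace has no T-invariant subspace other than {0} and itself. -/
open scoped Classical

noncomputable section

/-- The constant family for the wreath square: `n_1 = n_2 = m`. -/
abbrev n2 (m : ℕ) : Fin 2 → ℕ := fun _ => m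

/-- The Terwilliger algebra of `(K_m)^{≀2}`. -/
def T2 (m : ℕ) (hm : 2 ≤ m) :
    Subalgebra ℂ (Matrix (∀ k : Fin 2, Fin (n2 m k)) (∀ k : Fin 2, Fin (n2 m k)) ℂ) :=
  wT 2 (n2 m) fun _ => hm

/-!
Identify `ℂ^X` with `ℂ^m ⊗ ℂ^m` (first factor: coordinate 1, second: coordinate 2); write `o` for
the base coordinate, `δ` for its indicator and `1` for the all-ones vector of `ℂ^m`.
On pure tensors `A₁ (f ⊗ g) = (J f - f) ⊗ g` and `A₂ (f ⊗ g) = J f ⊗ (J g - g)`, with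
`J f = (∑ f) • 1`, while `E_i^*` is the diagonal matrix of the indicator `χ_i` of the `i`-th class
of the base vertex: `χ₀ = δ ⊗ δ`, `χ₁ = (1 - δ) ⊗ δ`, `χ₂ = 1 ⊗ (1 - δ)`.

Complete `δ, 1 - δ` and `1, m δ - 1` to orthogonal bases `φ`, `ψ` of `ℂ^m` by one orthogonal basis
of `{f | f o = 0, ∑ f = 0}`. The `m²` vectors `φ_i ⊗ δ` and `ψ_i ⊗ φ_k` (`k ≠ 0`) form an orthogonal
basis of `ℂ^X` containing `χ₀, χ₁, χ₂`, and each of the other `m² - 3` is a common eigenvector of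
the generators, so spans a `T`-invariant line. The span `W₀` of `χ₀, χ₁, χ₂` is the orthogonal
complement of these lines, hence `T`-invariant because the generators are Hermitian.
`W₀` is irreducible: `E_j^*` extracts a multiple of `χ_j` from any vector of `W₀`,
`E₀^* A_j χ_j` is a nonzero multiple of `χ₀`, and `A_j χ₀ = χ_j`.
-/
open Matrix Submodule
open scoped ComplexOrder

namespace WreathSquare

section Orthogonality

variable {n ι : Type*} [Fintype n]

def IsOrthoFamily (v : ι → n → ℂ) : Prop :=
  Pairwise fun i j => v i ⬝ᵥ star (v j) = 0

lemma dotProduct_star_eq_zero_comm {x y : n → ℂ} : x ⬝ᵥ star y = 0 ↔ y ⬝ᵥ star x = 0 := by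
  rw [← star_eq_zero, ← star_dotProduct_star, star_star]

lemma one_dotProduct_star (f : n → ℂ) : 1 ⬝ᵥ star f = star (∑ a, f a) := by
  simp [one_dotProduct, star_sum]

lemma dotProduct_star_eq_zero_of_mem_span {S T : Set (n → ℂ)}
    (h : ∀ x ∈ S, ∀ y ∈ T, x ⬝ᵥ star y = 0) {x y : n → ℂ}
    (hx : x ∈ span ℂ S) (hy : y ∈ span ℂ T) : x ⬝ᵥ star y = 0 := by
  induction hx using span_induction with
  | mem x hx =>
    induction hy using span_induction with
    | mem y hy => exact h x hx y hy
    | zero => simp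
    | add y y' _ _ hy hy' => simp [dotProduct_add, hy, hy']
    | smul c y _ hy => simp [dotProduct_smul, hy]
  | zero => simp
  | add x x' _ _ hx hx' => simp [add_dotProduct, hx, hx']
  | smul c x _ hx => simp [smul_dotProduct, hx]

lemma isOrthoFamily_sum_elim {a b : n → ℂ} {h : ι → n → ℂ} (hab : a ⬝ᵥ star b = 0)
    (ha : ∀ j, a ⬝ᵥ star (h j) = 0) (hb : ∀ j, b ⬝ᵥ star (h j) = 0) (hh : IsOrthoFamily h) :
    IsOrthoFamily (Sum.elim ![a, b] h) := by
  have hba := dotProduct_star_eq_zero_comm.mp hab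
  rintro (i | i) (j | j) hij
  · fin_cases i <;> fin_cases j <;> simp_all
  · fin_cases i <;> simp [ha, hb]
  · fin_cases j <;>
      simp [dotProduct_star_eq_zero_comm.mp (ha i), dotProduct_star_eq_zero_comm.mp (hb i)]
  · exact hh fun h => hij (congrArg Sum.inr h)

lemma IsOrthoFamily.linearIndependent {v : ι → n → ℂ} (hv : IsOrthoFamily v)
    (hne : ∀ i, v i ≠ 0) : LinearIndependent ℂ v := by
  have hE : LinearIndependent ℂ fun i => WithLp.toLp 2 (v i) :=
    linearIndependent_of_ne_zero_of_inner_eq_zero (by simpa using hne)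
      fun _ _ hij => (EuclideanSpace.inner_toLp_toLp _ _).trans
        (dotProduct_star_eq_zero_comm.mp (hv hij))
  exact hE.map' (WithLp.linearEquiv 2 ℂ (n → ℂ)).toLinearMap (LinearEquiv.ker _)

variable [Fintype ι] {v : ι → n → ℂ}

lemma IsOrthoFamily.span_eq_top (hv : IsOrthoFamily v) (hne : ∀ i, v i ≠ 0)
    (hcard : Fintype.card ι = Fintype.card n) : span ℂ (Set.range v) = ⊤ :=
  (hv.linearIndependent hne).span_eq_top_of_card_eq_finrank' (by simpa using hcard)

lemma IsOrthoFamily.mem_span_image_iff (hv : IsOrthoFamily v) (hne : ∀ i, v i ≠ 0)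
    (htop : span ℂ (Set.range v) = ⊤) (P : Set ι) {x : n → ℂ} :
    x ∈ span ℂ (v '' P) ↔ ∀ j ∉ P, x ⬝ᵥ star (v j) = 0 := by
  classical
  refine ⟨fun hx j hj => ?_, fun hx => ?_⟩
  · refine dotProduct_star_eq_zero_of_mem_span ?_ hx (subset_span rfl)
    rintro _ ⟨i, hi, rfl⟩ _ rfl
    exact hv (ne_of_mem_of_not_mem hi hj)
  obtain ⟨c, rfl⟩ := (mem_span_range_iff_exists_fun ℂ).mp (htop ▸ mem_top (x := x))
  have hc : ∀ j ∉ P, c j = 0 := by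
    intro j hj
    have hcj := hx j hj
    rw [sum_dotProduct, Finset.sum_eq_single j (fun i _ hij => by rw [smul_dotProduct, hv hij,
      smul_zero]) (by simp)] at hcj
    simpa [smul_dotProduct, hne j] using hcj
  refine sum_mem fun i _ => ?_
  by_cases hi : i ∈ P
  · exact smul_mem _ _ (subset_span ⟨i, hi, rfl⟩)
  · simp [hc i hi]

lemma mulVec_dotProduct_star_of_isHermitian {M : Matrix n n ℂ} (hM : M.IsHermitian)
    (x y : n → ℂ) : (M *ᵥ x) ⬝ᵥ star y = x ⬝ᵥ star (M *ᵥ y) := by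
  rw [star_mulVec, hM.eq, dotProduct_comm, dotProduct_mulVec, dotProduct_comm]

lemma IsOrthoFamily.mulVec_mem_span_image (hv : IsOrthoFamily v) (hne : ∀ i, v i ≠ 0)
    (htop : span ℂ (Set.range v) = ⊤) (P : Set ι) {M : Matrix n n ℂ} (hM : M.IsHermitian)
    (heig : ∀ j ∉ P, ∃ c : ℂ, M *ᵥ v j = c • v j) :
    ∀ x ∈ span ℂ (v '' P), M *ᵥ x ∈ span ℂ (v '' P) := by
  simp only [hv.mem_span_image_iff hne htop]
  intro x hx j hj
  obtain ⟨c, hc⟩ := heig j hj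
  rw [mulVec_dotProduct_star_of_isHermitian hM, hc, star_smul, dotProduct_smul, hx j hj,
    smul_zero]

end Orthogonality

section Invariance

variable {n R : Type*} [Fintype n] [CommRing R]

lemma mulVec_mem_of_mem_adjoin [DecidableEq n] {S : Set (Matrix n n R)} {U : Submodule R (n → R)}
    (hS : ∀ M ∈ S, ∀ v ∈ U, M *ᵥ v ∈ U) {M : Matrix n n R} (hM : M ∈ Algebra.adjoin R S) :
    ∀ v ∈ U, M *ᵥ v ∈ U := by
  induction hM using Algebra.adjoin_induction with
  | mem M hM => exact hS M hM
  | algebraMap r =>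
    intro v hv
    simpa [Algebra.algebraMap_eq_smul_one, smul_mulVec] using U.smul_mem r hv
  | add M N _ _ hM hN => intro v hv; rw [add_mulVec]; exact U.add_mem (hM v hv) (hN v hv)
  | mul M N _ _ hM hN => intro v hv; rw [← mulVec_mulVec]; exact hM _ (hN v hv)

lemma mulVec_mem_span_singleton {M : Matrix n n R} {v : n → R} {c : R} (h : M *ᵥ v = c • v) :
    ∀ x ∈ span R {v}, M *ᵥ x ∈ span R {v} := by
  intro x hx
  obtain ⟨a, rfl⟩ := mem_span_singleton.mp hx
  rw [mulVec_smul, h, smul_smul]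
  exact mem_span_singleton.mpr ⟨a * c, rfl⟩

end Invariance

section SpanAndLines

variable {n ι : Type*} (v : ι → n → ℂ) (P : Set ι)

def spanAndLines : Option {i // i ∉ P} → Submodule ℂ (n → ℂ)
  | none => span ℂ (v '' P)
  | some j => span ℂ {v j}

variable {v P}

lemma spanAndLines_orthogonal [Fintype n] (hv : IsOrthoFamily v) {a b : Option {i // i ∉ P}}
    (hab : a ≠ b) : ∀ x ∈ spanAndLines v P a, ∀ y ∈ spanAndLines v P b, x ⬝ᵥ star y = 0 := by
  intro x hx y hy
  rcases a with _ | ⟨i, hi⟩ <;> rcases b with _ | ⟨j, hj⟩ <;>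
    refine dotProduct_star_eq_zero_of_mem_span ?_ hx hy
  · exact absurd rfl hab
  · rintro _ ⟨k, hk, rfl⟩ _ rfl
    exact hv (ne_of_mem_of_not_mem hk hj)
  · rintro _ rfl _ ⟨k, hk, rfl⟩
    exact hv (ne_of_mem_of_not_mem hk hi).symm
  · rintro _ rfl _ rfl
    exact hv fun h => hab (congrArg some (Subtype.ext h))

lemma iSup_spanAndLines (htop : span ℂ (Set.range v) = ⊤) : ⨆ a, spanAndLines v P a = ⊤ := by
  refine eq_top_iff.mpr (htop ▸ span_le.mpr ?_)
  rintro _ ⟨i, rfl⟩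
  by_cases hi : i ∈ P
  · exact mem_iSup_of_mem none (subset_span ⟨i, hi, rfl⟩)
  · exact mem_iSup_of_mem (some ⟨i, hi⟩) (mem_span_singleton_self _)

lemma finrank_spanAndLines_none [Fintype n] [Fintype P] (hv : IsOrthoFamily v)
    (hne : ∀ i, v i ≠ 0) : Module.finrank ℂ (spanAndLines v P none) = Fintype.card P := by
  rw [spanAndLines, Set.image_eq_range]
  exact finrank_span_eq_card ((hv.linearIndependent hne).comp _ Subtype.val_injective)

lemma finrank_spanAndLines_some (hne : ∀ i, v i ≠ 0) (j : {i // i ∉ P}) :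
    Module.finrank ℂ (spanAndLines v P (some j)) = 1 :=
  finrank_span_singleton (hne j)

end SpanAndLines

section FactorSpace

variable {α ι : Type*} [DecidableEq α] (o : α)

def deltaFamily (h : ι → α → ℂ) : Fin 2 ⊕ ι → α → ℂ :=
  Sum.elim ![Pi.single o 1, 1 - Pi.single o 1] h

variable {o} {h : ι → α → ℂ}

lemma deltaFamily_ne_zero [Nontrivial α] (hne : ∀ j, h j ≠ 0) (i : Fin 2 ⊕ ι) :
    deltaFamily o h i ≠ 0 := by
  obtain ⟨a, ha⟩ := exists_ne o
  rcases i with i | j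
  · fin_cases i
    · simp [deltaFamily]
    · exact fun hz => by simpa [deltaFamily, ha] using congrFun hz a
  · exact hne j

lemma deltaFamily_apply_self (h0 : ∀ j, h j o = 0) {i : Fin 2 ⊕ ι} (hi : i ≠ .inl 0) :
    deltaFamily o h i o = 0 := by
  rcases i with i | j
  · fin_cases i
    · exact absurd rfl hi
    · simp [deltaFamily]
  · exact h0 j

variable [Fintype α]

variable (o) in
def onesFamily (h : ι → α → ℂ) : Fin 2 ⊕ ι → α → ℂ :=
  Sum.elim ![1, (Fintype.card α : ℂ) • Pi.single o 1 - 1] h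

lemma onesFamily_ne_zero [Nontrivial α] (hne : ∀ j, h j ≠ 0) (i : Fin 2 ⊕ ι) :
    onesFamily o h i ≠ 0 := by
  have hcard : (Fintype.card α : ℂ) - 1 ≠ 0 := by
    rw [sub_ne_zero]; exact_mod_cast (Fintype.one_lt_card (α := α)).ne'
  rcases i with i | j
  · fin_cases i
    · simp [onesFamily]
    · exact fun hz => hcard (by simpa [onesFamily] using congrFun hz o)
  · exact hne j

lemma sum_onesFamily (hs : ∀ j, ∑ a, h j a = 0) {i : Fin 2 ⊕ ι} (hi : i ≠ .inl 0) :
    ∑ a, onesFamily o h i a = 0 := by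
  rcases i with i | j
  · fin_cases i
    · exact absurd rfl hi
    · simp [onesFamily, Finset.sum_sub_distrib, ← Finset.mul_sum]
  · exact hs j

lemma isOrthoFamily_deltaFamily (hh : IsOrthoFamily h) (h0 : ∀ j, h j o = 0)
    (hs : ∀ j, ∑ a, h j a = 0) : IsOrthoFamily (deltaFamily o h) :=
  isOrthoFamily_sum_elim (by simp) (by simp [h0])
    (by simp [sub_dotProduct, one_dotProduct_star, h0, hs]) hh

lemma isOrthoFamily_onesFamily (hh : IsOrthoFamily h) (h0 : ∀ j, h j o = 0)
    (hs : ∀ j, ∑ a, h j a = 0) : IsOrthoFamily (onesFamily o h) :=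
  isOrthoFamily_sum_elim (by simp [dotProduct_sub]) (by simp [one_dotProduct_star, hs])
    (by simp [sub_dotProduct, smul_dotProduct, one_dotProduct_star, h0, hs]) hh

lemma exists_isOrthoFamily_apply_eq_zero_sum_eq_zero [Nontrivial α] (o : α) :
    ∃ (r : ℕ) (h : Fin r → α → ℂ), r + 2 = Fintype.card α ∧
      IsOrthoFamily h ∧ (∀ j, h j ≠ 0) ∧ (∀ j, h j o = 0) ∧ ∀ j, ∑ a, h j a = 0 := by
  let e : Fin 2 → EuclideanSpace ℂ α := ![WithLp.toLp 2 (Pi.single o 1), WithLp.toLp 2 1]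
  have he : LinearIndependent ℂ e := by
    refine LinearIndependent.pair_iff.mpr fun s t hst => ?_
    obtain ⟨a, ha⟩ := exists_ne o
    have hto := congrArg (fun x : EuclideanSpace ℂ α => x.ofLp o) hst
    have hta := congrArg (fun x : EuclideanSpace ℂ α => x.ofLp a) hst
    simp [ha] at hto hta
    exact ⟨by simpa [hta] using hto, hta⟩
  let b := stdOrthonormalBasis ℂ (span ℂ (Set.range e))ᗮ
  have hmem (i : Fin 2) (j) : inner ℂ (e i) (b j : EuclideanSpace ℂ α) = 0 :=
    inner_right_of_mem_orthogonal (subset_span (Set.mem_range_self i)) (b j).2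
  refine ⟨_, fun j => (b j : EuclideanSpace ℂ α).ofLp, ?_, fun i j hij => ?_, fun j => ?_,
    fun j => ?_, fun j => ?_⟩
  · have := (span ℂ (Set.range e)).finrank_add_finrank_orthogonal
    rw [finrank_span_eq_card he, finrank_euclideanSpace, Fintype.card_fin] at this
    omega
  · have h : inner ℂ (b j) (b i) = 0 := b.orthonormal.2 hij.symm
    rwa [coe_inner, EuclideanSpace.inner_eq_star_dotProduct] at h
  · simpa using b.orthonormal.ne_zero j
  · simpa [e, EuclideanSpace.inner_eq_star_dotProduct] using hmem 0 j
  · simpa [e, EuclideanSpace.inner_eq_star_dotProduct, dotProduct_one] using hmem 1 j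

end FactorSpace

section WreathProduct

variable {d : ℕ} {n : Fin d → ℕ}

lemma wRel_comm {i : ℕ} {x y : ∀ k : Fin d, Fin (n k)} : wRel d n i x y ↔ wRel d n i y x := by
  unfold wRel
  split_ifs
  · simp only [ne_comm, eq_comm]
  · exact eq_comm

lemma wA_isHermitian (i : ℕ) : (wA d n i).IsHermitian := by
  ext x y
  simp [wA, wRel_comm]

lemma wE_eq_diagonal (hn : ∀ k, 2 ≤ n k) (i : ℕ) :
    wE d n hn i = diagonal fun y => if wRel d n i (wBase d n hn) y then 1 else 0 := by
  ext y z
  by_cases hyz : y = z <;> simp [wE, diagonal, hyz]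

lemma wE_isHermitian (hn : ∀ k, 2 ≤ n k) (i : ℕ) : (wE d n hn i).IsHermitian := by
  rw [wE_eq_diagonal]
  exact isHermitian_diagonal_of_self_adjoint _ (by ext y; simp)

end WreathProduct

variable {m : ℕ}

abbrev Vtx (m : ℕ) := ∀ k : Fin 2, Fin (n2 m k)

def tensor (f g : Fin m → ℂ) : Vtx m → ℂ := fun x => f (x 0) * g (x 1)

lemma sum_tensor (f g : Fin m → ℂ) : ∑ x, tensor f g x = (∑ a, f a) * ∑ a, g a := by
  simpa [Fin.prod_univ_two, tensor] using
    (Fintype.prod_sum (κ := fun k => Fin (n2 m k)) ![f, g]).symm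

lemma tensor_dotProduct_star (f g f' g' : Fin m → ℂ) :
    tensor f g ⬝ᵥ star (tensor f' g') = (f ⬝ᵥ star f') * (g ⬝ᵥ star g') := by
  simp only [dotProduct, ← sum_tensor, tensor, Pi.star_apply, star_mul']
  exact Finset.sum_congr rfl fun x _ => by ring

lemma tensor_ne_zero {f g : Fin m → ℂ} (hf : f ≠ 0) (hg : g ≠ 0) : tensor f g ≠ 0 := by
  obtain ⟨a, ha⟩ := Function.ne_iff.mp hf
  obtain ⟨c, hc⟩ := Function.ne_iff.mp hg
  intro h
  exact mul_ne_zero ha hc (by simpa [tensor] using congrFun h ![a, c])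

lemma isOrthoFamily_tensor {ι κ : Type*} {B : κ → ι → Fin m → ℂ} {φ : κ → Fin m → ℂ}
    (hB : ∀ k, IsOrthoFamily (B k)) (hφ : IsOrthoFamily φ) :
    IsOrthoFamily fun p : ι × κ => tensor (B p.2 p.1) (φ p.2) := by
  rintro ⟨i, k⟩ ⟨j, l⟩ hne
  rw [tensor_dotProduct_star]
  by_cases hkl : k = l
  · subst hkl
    exact mul_eq_zero_of_left (hB k fun hij => hne (Prod.ext hij rfl)) _
  · exact mul_eq_zero_of_right _ (hφ hkl)

lemma wA_zero : wA 2 (n2 m) 0 = 1 := by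
  ext x y
  simp [wA, wRel, one_apply]

lemma wA_one_mulVec_tensor (f g : Fin m → ℂ) :
    wA 2 (n2 m) 1 *ᵥ tensor f g = tensor ((∑ a, f a) • 1 - f) g := by
  ext x
  have hterm : ∀ y, wA 2 (n2 m) 1 x y * tensor f g y = tensor
      (fun a => f a - if x 0 = a then f a else 0) (fun c => if x 1 = c then g c else 0) y := by
    intro y
    simp only [wA, of_apply, wRel, tensor]
    split_ifs <;> simp_all [Fin.forall_fin_two]
  simp only [mulVec, dotProduct, hterm, sum_tensor]
  simp [Finset.sum_sub_distrib, tensor]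

lemma wA_two_mulVec_tensor (f g : Fin m → ℂ) :
    wA 2 (n2 m) 2 *ᵥ tensor f g = tensor ((∑ a, f a) • 1) ((∑ c, g c) • 1 - g) := by
  ext x
  have hterm : ∀ y, wA 2 (n2 m) 2 x y * tensor f g y =
      tensor f (fun c => g c - if x 1 = c then g c else 0) y := by
    intro y
    simp only [wA, of_apply, wRel, tensor]
    split_ifs <;> simp_all [Fin.forall_fin_two]
  simp only [mulVec, dotProduct, hterm, sum_tensor]
  simp [Finset.sum_sub_distrib, tensor]

def origin (hm : 2 ≤ m) : Fin m := ⟨0, by omega⟩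

def classVec (hm : 2 ≤ m) : Fin 3 → Vtx m → ℂ :=
  ![tensor (Pi.single (origin hm) 1) (Pi.single (origin hm) 1),
    tensor (1 - Pi.single (origin hm) 1) (Pi.single (origin hm) 1),
    tensor 1 (1 - Pi.single (origin hm) 1)]

variable (hm : 2 ≤ m)

lemma wE_eq_diagonal_classVec (j : Fin 3) :
    wE 2 (n2 m) (fun _ => hm) j = diagonal (classVec hm j) := by
  rw [wE_eq_diagonal]
  congr 1
  ext x
  rw [show wBase 2 (n2 m) (fun _ => hm) = fun _ => origin hm from rfl]
  fin_cases j <;> simp [classVec, tensor, Pi.single_apply, wRel, funext_iff,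
    Fin.forall_fin_two] <;> split_ifs <;> simp_all [eq_comm]

lemma wE_mulVec {j : ℕ} (hj : j < 3) (v : Vtx m → ℂ) :
    wE 2 (n2 m) (fun _ => hm) j *ᵥ v = classVec hm ⟨j, hj⟩ * v := by
  ext x
  rw [wE_eq_diagonal_classVec hm ⟨j, hj⟩, mulVec_diagonal, Pi.mul_apply]

lemma wE_zero_mulVec (v : Vtx m → ℂ) :
    wE 2 (n2 m) (fun _ => hm) 0 *ᵥ v = v (fun _ => origin hm) • classVec hm 0 := by
  ext x
  rw [wE_mulVec hm (by norm_num)]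
  by_cases hx : x = fun _ => origin hm
  · subst hx
    simp [classVec, tensor]
  · have : ¬ (x 0 = origin hm ∧ x 1 = origin hm) := fun h =>
      hx (funext (Fin.forall_fin_two.mpr h))
    simp [classVec, tensor, Pi.single_apply]
    split_ifs <;> simp_all

lemma classVec_mul_classVec (i j : Fin 3) :
    classVec hm i * classVec hm j = if i = j then classVec hm i else 0 := by
  fin_cases i <;> fin_cases j <;> ext x <;>
    by_cases h0 : x 0 = origin hm <;> by_cases h1 : x 1 = origin hm <;>
    simp [classVec, tensor, h0, h1]

lemma classVec_mul_sum (c : Fin 3 → ℂ) (j : Fin 3) :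
    classVec hm j * ∑ i, c i • classVec hm i = c j • classVec hm j := by
  simp [Finset.mul_sum, classVec_mul_classVec]

lemma wA_mulVec_classVec_zero (j : Fin 3) :
    wA 2 (n2 m) j *ᵥ classVec hm 0 = classVec hm j := by
  fin_cases j
  · simp [wA_zero]
  · simp [classVec, wA_one_mulVec_tensor]
  · simp [classVec, wA_two_mulVec_tensor]

lemma wA_mulVec_classVec_self_apply_ne_zero (j : Fin 3) :
    (wA 2 (n2 m) j *ᵥ classVec hm j) (fun _ => origin hm) ≠ 0 := by
  have hm1 : (m : ℂ) - 1 ≠ 0 := by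
    rw [sub_ne_zero]
    exact_mod_cast (by omega : m ≠ 1)
  fin_cases j
  · simp [wA_zero, classVec, tensor]
  · simpa [classVec, wA_one_mulVec_tensor, tensor, Finset.sum_sub_distrib] using hm1
  · simpa [classVec, wA_two_mulVec_tensor, tensor, Finset.sum_sub_distrib] using ⟨by omega, hm1⟩

lemma eq_bot_or_eq_span_classVec {U : Submodule ℂ (Vtx m → ℂ)}
    (hU : U ≤ span ℂ (Set.range (classVec hm))) (hinv : ∀ M ∈ T2 m hm, ∀ v ∈ U, M *ᵥ v ∈ U) :
    U = ⊥ ∨ U = span ℂ (Set.range (classVec hm)) := by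
  refine or_iff_not_imp_left.mpr fun hbot => le_antisymm hU ?_
  have hA : ∀ i ≤ 2, wA 2 (n2 m) i ∈ T2 m hm := fun i hi =>
    Algebra.subset_adjoin (Or.inl ⟨i, hi, rfl⟩)
  have hE : ∀ i ≤ 2, wE 2 (n2 m) (fun _ => hm) i ∈ T2 m hm := fun i hi =>
    Algebra.subset_adjoin (Or.inr ⟨i, hi, rfl⟩)
  obtain ⟨v, hvU, hv0⟩ := exists_mem_ne_zero_of_ne_bot hbot
  obtain ⟨c, rfl⟩ := (mem_span_range_iff_exists_fun ℂ).mp (hU hvU)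
  obtain ⟨j, hj⟩ : ∃ j, c j ≠ 0 := by
    by_contra! hc
    exact hv0 (by simp [hc])
  have hjU : classVec hm j ∈ U := by
    have := hinv _ (hE j (by omega)) _ hvU
    rwa [wE_mulVec hm j.isLt, Fin.eta, classVec_mul_sum, smul_mem_iff _ hj] at this
  have h0U : classVec hm 0 ∈ U := by
    have := hinv _ (hE 0 (by norm_num)) _ (hinv _ (hA j (by omega)) _ hjU)
    rwa [wE_zero_mulVec, smul_mem_iff _ (wA_mulVec_classVec_self_apply_ne_zero hm j)] at this
  refine span_le.mpr (Set.range_subset_iff.mpr fun i => ?_)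
  simpa [wA_mulVec_classVec_zero] using hinv _ (hA i (by omega)) _ h0U

def generators : Set (Matrix (Vtx m) (Vtx m) ℂ) :=
  {M | ∃ i ≤ 2, M = wA 2 (n2 m) i} ∪ {M | ∃ i ≤ 2, M = wE 2 (n2 m) (fun _ => hm) i}

lemma forall_mem_generators {p : Matrix (Vtx m) (Vtx m) ℂ → Prop} :
    (∀ M ∈ generators hm, p M) ↔
      ∀ j : Fin 3, p (wA 2 (n2 m) j) ∧ p (wE 2 (n2 m) (fun _ => hm) j) := by
  refine ⟨fun h j => ⟨h _ (Or.inl ⟨j, by omega, rfl⟩), h _ (Or.inr ⟨j, by omega, rfl⟩)⟩, ?_⟩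
  rintro h _ (⟨i, hi, rfl⟩ | ⟨i, hi, rfl⟩)
  exacts [(h ⟨i, by omega⟩).1, (h ⟨i, by omega⟩).2]

lemma isHermitian_of_mem_generators {M : Matrix (Vtx m) (Vtx m) ℂ} (hM : M ∈ generators hm) :
    M.IsHermitian := by
  rcases hM with ⟨i, -, rfl⟩ | ⟨i, -, rfl⟩
  exacts [wA_isHermitian _, wE_isHermitian _ _]

def IsCommonEigenvector (v : Vtx m → ℂ) : Prop :=
  ∀ M ∈ generators hm, ∃ c : ℂ, M *ᵥ v = c • v

variable {hm}

lemma isCommonEigenvector_tensor_single {f : Fin m → ℂ} (hf0 : f (origin hm) = 0)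
    (hfs : ∑ a, f a = 0) : IsCommonEigenvector hm (tensor f (Pi.single (origin hm) 1)) := by
  rw [IsCommonEigenvector, forall_mem_generators]
  intro j
  refine ⟨⟨![1, -1, 0] j, ?_⟩, ⟨![0, 1, 0] j, ?_⟩⟩ <;> fin_cases j <;> ext x <;>
    by_cases h0 : x 0 = origin hm <;> by_cases h1 : x 1 = origin hm <;>
    simp [wA_zero, wA_one_mulVec_tensor, wA_two_mulVec_tensor, wE_mulVec, classVec, tensor, h0,
      h1, hf0, hfs]

lemma isCommonEigenvector_tensor_of_sum_eq_zero {f g : Fin m → ℂ} (hfs : ∑ a, f a = 0)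
    (hg0 : g (origin hm) = 0) : IsCommonEigenvector hm (tensor f g) := by
  rw [IsCommonEigenvector, forall_mem_generators]
  intro j
  refine ⟨⟨![1, -1, 0] j, ?_⟩, ⟨![0, 0, 1] j, ?_⟩⟩ <;> fin_cases j <;> ext x <;>
    by_cases h1 : x 1 = origin hm <;>
    simp [wA_zero, wA_one_mulVec_tensor, wA_two_mulVec_tensor, wE_mulVec, classVec, tensor, h1,
      hg0, hfs]

lemma isCommonEigenvector_tensor_one {g : Fin m → ℂ} (hg0 : g (origin hm) = 0)
    (hgs : ∑ a, g a = 0) : IsCommonEigenvector hm (tensor 1 g) := by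
  rw [IsCommonEigenvector, forall_mem_generators]
  intro j
  refine ⟨⟨![1, (m : ℂ) - 1, -(m : ℂ)] j, ?_⟩, ⟨![0, 0, 1] j, ?_⟩⟩ <;> fin_cases j <;> ext x <;>
    by_cases h1 : x 1 = origin hm <;>
    simp [wA_zero, wA_one_mulVec_tensor, wA_two_mulVec_tensor, wE_mulVec, classVec, tensor, h1,
      hg0, hgs]

section Basis

variable {r : ℕ} {h : Fin r → Fin m → ℂ}

variable (hm h) in
def basisVec (p : (Fin 2 ⊕ Fin r) × (Fin 2 ⊕ Fin r)) : Vtx m → ℂ :=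
  tensor ((if p.2 = .inl 0 then deltaFamily (origin hm) h else onesFamily (origin hm) h) p.1)
    (deltaFamily (origin hm) h p.2)

def primaryIdx (r : ℕ) : Finset ((Fin 2 ⊕ Fin r) × (Fin 2 ⊕ Fin r)) :=
  {(.inl 0, .inl 0), (.inl 1, .inl 0), (.inl 0, .inl 1)}

lemma card_primaryIdx : (primaryIdx r).card = 3 := by
  simp [primaryIdx]

lemma card_option_notMem_primaryIdx (hr : r + 2 = m) :
    Fintype.card (Option {p // p ∉ primaryIdx r}) = m ^ 2 - 2 := by
  simp only [Fintype.card_option, Fintype.card_subtype_compl, Fintype.card_coe, card_primaryIdx,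
    Fintype.card_prod, Fintype.card_sum, Fintype.card_fin]
  subst hr
  have : 2 ^ 2 ≤ (r + 2) ^ 2 := Nat.pow_le_pow_left (by omega) 2
  ring_nf at this ⊢
  omega

lemma image_basisVec_primaryIdx : basisVec hm h '' primaryIdx r = Set.range (classVec hm) := by
  simp only [primaryIdx, Finset.coe_insert, Finset.coe_singleton, Set.image_insert_eq,
    Set.image_singleton, classVec, range_cons, Set.singleton_union]
  simp [basisVec, deltaFamily, onesFamily]

lemma basisVec_ne_zero (hne : ∀ j, h j ≠ 0) (p) : basisVec hm h p ≠ 0 := by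
  have : Nontrivial (Fin m) := Fin.nontrivial_iff_two_le.mpr hm
  refine tensor_ne_zero ?_ (deltaFamily_ne_zero hne _)
  split_ifs
  exacts [deltaFamily_ne_zero hne _, onesFamily_ne_zero hne _]

lemma isOrthoFamily_basisVec (hh : IsOrthoFamily h) (h0 : ∀ j, h j (origin hm) = 0)
    (hs : ∀ j, ∑ a, h j a = 0) : IsOrthoFamily (basisVec hm h) := by
  have hB (k : Fin 2 ⊕ Fin r) : IsOrthoFamily
      (if k = .inl 0 then deltaFamily (origin hm) h else onesFamily (origin hm) h) := by
    split_ifs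
    exacts [isOrthoFamily_deltaFamily hh h0 hs, isOrthoFamily_onesFamily hh h0 hs]
  -- elaborated without the expected type: unifying it with `basisVec` first times out
  exact (isOrthoFamily_tensor hB (isOrthoFamily_deltaFamily hh h0 hs) :)

lemma span_range_basisVec (hh : IsOrthoFamily h) (hne : ∀ j, h j ≠ 0)
    (h0 : ∀ j, h j (origin hm) = 0) (hs : ∀ j, ∑ a, h j a = 0) (hr : r + 2 = m) :
    span ℂ (Set.range (basisVec hm h)) = ⊤ :=
  (isOrthoFamily_basisVec hh h0 hs).span_eq_top (basisVec_ne_zero hne) (by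
    simp [Fintype.card_pi, ← hr]
    ring)

lemma isCommonEigenvector_basisVec (h0 : ∀ j, h j (origin hm) = 0) (hs : ∀ j, ∑ a, h j a = 0)
    {p} (hp : p ∉ primaryIdx r) : IsCommonEigenvector hm (basisVec hm h p) := by
  obtain ⟨i, k⟩ := p
  simp only [primaryIdx, Finset.mem_insert, Finset.mem_singleton, Prod.mk.injEq, not_or] at hp
  by_cases hk : k = .inl 0
  · subst hk
    obtain ⟨i, rfl⟩ : ∃ j, i = .inr j := by
      rcases i with i | j
      · fin_cases i <;> simp at hp
      · exact ⟨j, rfl⟩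
    simpa [basisVec, deltaFamily] using isCommonEigenvector_tensor_single (h0 i) (hs i)
  by_cases hi : i = .inl 0
  · subst hi
    obtain ⟨k, rfl⟩ : ∃ j, k = .inr j := by
      rcases k with k | j
      · fin_cases k <;> simp at hp hk
      · exact ⟨j, rfl⟩
    simpa [basisVec, onesFamily, deltaFamily] using isCommonEigenvector_tensor_one (h0 k) (hs k)
  simpa [basisVec, hk] using
    isCommonEigenvector_tensor_of_sum_eq_zero (sum_onesFamily hs hi) (deltaFamily_apply_self h0 hk)

lemma mulVec_mem_spanAndLines (hh : IsOrthoFamily h) (hne : ∀ j, h j ≠ 0)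
    (h0 : ∀ j, h j (origin hm) = 0) (hs : ∀ j, ∑ a, h j a = 0) (hr : r + 2 = m) (a) :
    ∀ M ∈ T2 m hm, ∀ v ∈ spanAndLines (basisVec hm h) (primaryIdx r) a,
      M *ᵥ v ∈ spanAndLines (basisVec hm h) (primaryIdx r) a := by
  intro M hM
  refine mulVec_mem_of_mem_adjoin (S := generators hm) (fun N hN => ?_) hM
  rcases a with _ | ⟨p, hp⟩
  · exact (isOrthoFamily_basisVec hh h0 hs).mulVec_mem_span_image (basisVec_ne_zero hne)
      (span_range_basisVec hh hne h0 hs hr) _ (isHermitian_of_mem_generators hm hN)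
      fun p hp => isCommonEigenvector_basisVec h0 hs hp N hN
  · obtain ⟨c, hc⟩ := isCommonEigenvector_basisVec h0 hs hp N hN
    exact mulVec_mem_span_singleton hc

end Basis

end WreathSquare

open WreathSquare

/-- For the wreath square `(K_m)^{≀2}`, the standard module
`ℂ^X` decomposes as an orthogonal direct sum (w.r.t. the standard Hermitian
inner product) of `m² - 2` subspaces, each invariant under every matrix of
the Terwilliger algebra `T`, exactly one of which has dimension `3` and the
remaining `m² - 3` have dimension `1`; the `3`-dimensional subspace has no
`T`-invariant subspace other than `{0}` and itself. -/
theorem standard_module_decomposition_wreath_square (m : ℕ) (hm : 2 ≤ m) :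
    ∃ (W : Fin (m ^ 2 - 2) → Submodule ℂ ((∀ k : Fin 2, Fin (n2 m k)) → ℂ))
      (i₀ : Fin (m ^ 2 - 2)),
      (∀ i j, i ≠ j → ∀ u ∈ W i, ∀ w ∈ W j,
        ∑ y, u y * (starRingEnd ℂ) (w y) = 0) ∧
      (⨆ i, W i) = ⊤ ∧
      (∀ i, ∀ M ∈ T2 m hm, ∀ v ∈ W i, M.mulVec v ∈ W i) ∧
      Module.finrank ℂ ↥(W i₀) = 3 ∧
      (∀ i, i ≠ i₀ → Module.finrank ℂ ↥(W i) = 1) ∧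
      (∀ U : Submodule ℂ ((∀ k : Fin 2, Fin (n2 m k)) → ℂ), U ≤ W i₀ →
        (∀ M ∈ T2 m hm, ∀ v ∈ U, M.mulVec v ∈ U) → U = ⊥ ∨ U = W i₀) := by
  have : Nontrivial (Fin m) := Fin.nontrivial_iff_two_le.mpr hm
  obtain ⟨r, h, hr, hh, hne, h0, hs⟩ := exists_isOrthoFamily_apply_eq_zero_sum_eq_zero (origin hm)
  rw [Fintype.card_fin] at hr
  have hv := isOrthoFamily_basisVec hh h0 hs
  have hvne := basisVec_ne_zero (hm := hm) hne
  let W := spanAndLines (basisVec hm h) (primaryIdx r)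
  obtain e : Fin (m ^ 2 - 2) ≃ Option {p // p ∉ primaryIdx r} :=
    Fintype.equivOfCardEq (by rw [Fintype.card_fin, card_option_notMem_primaryIdx hr])
  refine ⟨W ∘ e, e.symm none, fun i j hij => spanAndLines_orthogonal hv (e.injective.ne hij),
    ?_, fun i => mulVec_mem_spanAndLines hh hne h0 hs hr (e i), ?_, fun i hi => ?_, ?_⟩
  · exact (e.iSup_comp (g := W)).trans (iSup_spanAndLines (span_range_basisVec hh hne h0 hs hr))
  · show Module.finrank ℂ (W (e (e.symm none))) = 3
    rw [e.apply_symm_apply, finrank_spanAndLines_none hv hvne]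
    simpa using card_primaryIdx
  · obtain ⟨p, hp⟩ := Option.ne_none_iff_exists'.mp fun h => hi (e.eq_symm_apply.mpr h)
    show Module.finrank ℂ (W (e i)) = 1
    rw [hp]
    exact finrank_spanAndLines_some hvne _
  · simpa [W, spanAndLines, image_basisVec_primaryIdx] using
      fun U => eq_bot_or_eq_span_classVec hm (U := U)
end
end
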